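/- arXiv:2207.06834 — 12 statements merged into one kernel-verified Lean document; each statement's English description precedes it below -/
import Mathlib

section
/- A connected graph G of order n(G) ≥ 2 satisfies dim_ms(G) = n(G) - 1 if and only if G is a regular graph with diameter at most 2. -/
open SimpleGraph

/-- The multiset representation of `u` with respect to `S`: the multiset of
distances from `u` to the vertices of `S`, counted with multiplicity. -/
noncomputable def mrep {V : Type*} (G : SimpleGraph V) (u : V) (S : Finset V) : Multiset ℕ :=
  S.val.map fun w => G.dist u w

section Helpers

variable {V : Type*} (G : SimpleGraph V)

lemma mrep_card (u : V) (S : Finset V) : (mrep G u S).card = S.card := by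
  simp [mrep]

lemma mrep_sum (u : V) (S : Finset V) : (mrep G u S).sum = ∑ w ∈ S, G.dist u w := by
  rfl

lemma mrep_count [DecidableEq V] (u : V) (S : Finset V) (k : ℕ) :
    (mrep G u S).count k = (S.filter fun w => G.dist u w = k).card := by
  simp [mrep, Multiset.count_map, Finset.filter, Finset.card, eq_comm]

lemma omr_exists_adj_dist (hconn : G.Connected) {a c : V} {m : ℕ} (h : G.dist a c = m + 1) :
    ∃ x, G.Adj a x ∧ G.dist x c = m := by
  obtain ⟨p, hp⟩ := hconn.exists_walk_length_eq_dist a c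
  rw [h] at hp
  match p, hp with
  | .cons (v := x) hadj q, hp =>
    refine ⟨x, hadj, le_antisymm ?_ ?_⟩
    · have := G.dist_le q
      simp only [Walk.length_cons] at hp
      omega
    · have h1 : G.dist a x = 1 := (SimpleGraph.dist_eq_one_iff_adj).mpr hadj
      have := hconn.dist_triangle (u := a) (v := x) (w := c)
      omega

lemma omr_exists_dist_eq (hconn : G.Connected) :
    ∀ (n : ℕ) (a b : V), G.dist a b = n → ∀ k ≤ n, ∃ c, G.dist a c = k := by
  intro n
  induction n with
  | zero =>
    intro a b _ k hk
    have : k = 0 := Nat.le_zero.mp hk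
    exact ⟨a, this ▸ G.dist_self⟩
  | succ n ih =>
    intro a b hab k hk
    rcases Nat.eq_or_lt_of_le hk with h | h
    · exact ⟨b, h ▸ hab⟩
    · have hba : G.dist b a = n + 1 := by rwa [G.dist_comm]
      obtain ⟨x, hadj, hx⟩ := omr_exists_adj_dist G hconn hba
      exact ih a x (by rwa [G.dist_comm]) k (by omega)

lemma count_one_add_count_two {m : Multiset ℕ} (h : ∀ x ∈ m, x = 1 ∨ x = 2) :
    m.count 1 + m.count 2 = Multiset.card m := by
  induction m using Multiset.induction with
  | empty => simp
  | cons a s ih =>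
    have ha := h a (Multiset.mem_cons_self a s)
    have hs : ∀ x ∈ s, x = 1 ∨ x = 2 := fun x hx => h x (Multiset.mem_cons_of_mem hx)
    have := ih hs
    rcases ha with rfl | rfl <;> simp [Multiset.count_cons] <;> omega

lemma multiset_eq_12 {m1 m2 : Multiset ℕ}
    (h1 : ∀ x ∈ m1, x = 1 ∨ x = 2) (h2 : ∀ x ∈ m2, x = 1 ∨ x = 2)
    (hc : Multiset.card m1 = Multiset.card m2) (h1c : m1.count 1 = m2.count 1) : m1 = m2 := by
  ext a
  by_cases ha1 : a = 1
  · subst ha1; exact h1c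
  by_cases ha2 : a = 2
  · subst ha2
    have e1 := count_one_add_count_two h1
    have e2 := count_one_add_count_two h2
    omega
  · rw [Multiset.count_eq_zero_of_notMem, Multiset.count_eq_zero_of_notMem]
    · intro hm; rcases h2 a hm with h|h <;> contradiction
    · intro hm; rcases h1 a hm with h|h <;> contradiction

lemma exists_same_deg {V : Type*} [DecidableEq V] (G : SimpleGraph V) [DecidableRel G.Adj]
    (T : Finset V) (hT : 2 ≤ T.card) :
    ∃ u ∈ T, ∃ v ∈ T, u ≠ v ∧ (T.filter (G.Adj u)).card = (T.filter (G.Adj v)).card := by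
  by_contra hcon
  push_neg at hcon
  set f : V → ℕ := fun u => (T.filter (G.Adj u)).card with hf
  have hsub : ∀ u ∈ T, T.filter (G.Adj u) ⊆ T.erase u := by
    intro u hu w hw
    simp only [Finset.mem_filter] at hw
    exact Finset.mem_erase.mpr ⟨fun h => G.irrefl (h ▸ hw.2), hw.1⟩
  have hlt : ∀ u ∈ T, f u < T.card := fun u hu =>
    lt_of_le_of_lt (Finset.card_le_card (hsub u hu))
      (by rw [Finset.card_erase_of_mem hu]; omega)
  have hinj : Set.InjOn f T := by
    intro u hu v hv h
    by_contra hne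
    exact hcon u hu v hv hne h
  have himage : T.image f = Finset.range T.card := by
    apply Finset.eq_of_subset_of_card_le
    · intro x hx
      simp only [Finset.mem_image] at hx
      obtain ⟨u, hu, rfl⟩ := hx
      exact Finset.mem_range.mpr (hlt u hu)
    · rw [Finset.card_range, Finset.card_image_of_injOn hinj]
  have h0 : (0 : ℕ) ∈ T.image f := by rw [himage]; exact Finset.mem_range.mpr (by omega)
  have hm : T.card - 1 ∈ T.image f := by rw [himage]; exact Finset.mem_range.mpr (by omega)
  obtain ⟨v, hv, hv0⟩ := Finset.mem_image.mp h0
  obtain ⟨u, hu, hum⟩ := Finset.mem_image.mp hm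
  have huv : u ≠ v := fun h => by rw [h, hv0] at hum; omega
  have hfull : T.filter (G.Adj u) = T.erase u := by
    apply Finset.eq_of_subset_of_card_le (hsub u hu)
    rw [Finset.card_erase_of_mem hu]
    exact le_of_eq hum.symm
  have hadj : G.Adj u v := by
    have : v ∈ T.filter (G.Adj u) := hfull ▸ Finset.mem_erase.mpr ⟨fun h => huv h.symm, hv⟩
    exact (Finset.mem_filter.mp this).2
  have hmem : u ∈ T.filter (G.Adj v) := Finset.mem_filter.mpr ⟨hu, hadj.symm⟩
  have hpos : 0 < f v := Finset.card_pos.mpr ⟨u, hmem⟩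
  omega

end Helpers

/-- `S` is an outer multiset resolving set of `G`: the multiset representations of
the vertices outside `S` are pairwise distinct. -/
def IsOMR {V : Type*} (G : SimpleGraph V) (S : Finset V) : Prop :=
  ∀ u ∉ S, ∀ v ∉ S, mrep G u S = mrep G v S → u = v

/-- The outer multiset dimension of `G`. -/
noncomputable def dimMS {V : Type*} (G : SimpleGraph V) [Fintype V] : ℕ :=
  sInf {n | ∃ S : Finset V, S.card = n ∧ IsOMR G S}

/-- The diameter of `G`: the largest distance between vertices of `G`. -/
noncomputable def gdiam {V : Type*} (G : SimpleGraph V) [Fintype V] : ℕ :=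
  Finset.univ.sup fun p : V × V => G.dist p.1 p.2

theorem stmt_0 (V : Type*) [Fintype V] (G : SimpleGraph V) [DecidableRel G.Adj]
    (hconn : G.Connected) (hn : 2 ≤ Fintype.card V) :
    dimMS G = Fintype.card V - 1 ↔
      (∃ r : ℕ, G.IsRegularOfDegree r) ∧ gdiam G ≤ 2 := by
  classical
  set n := Fintype.card V with hndef
  have hne : Nonempty V := Fintype.card_pos_iff.mp (by omega)
  obtain ⟨v0⟩ := hne
  -- the trivial OMR set of size n - 1
  have hOMR0 : IsOMR G (Finset.univ.erase v0) := by
    intro u hu v hv _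
    have hu' : u = v0 := by
      by_contra h
      exact hu (Finset.mem_erase.mpr ⟨h, Finset.mem_univ u⟩)
    have hv' : v = v0 := by
      by_contra h
      exact hv (Finset.mem_erase.mpr ⟨h, Finset.mem_univ v⟩)
    rw [hu', hv']
  have hcard0 : (Finset.univ.erase v0).card = n - 1 := by
    rw [Finset.card_erase_of_mem (Finset.mem_univ v0), Finset.card_univ]
  have hub : dimMS G ≤ n - 1 := Nat.sInf_le ⟨Finset.univ.erase v0, hcard0, hOMR0⟩
  constructor
  · -- forward direction
    intro h
    have K : ∀ S : Finset V, IsOMR G S → n - 1 ≤ S.card := by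
      intro S hS
      have : dimMS G ≤ S.card := Nat.sInf_le ⟨S, rfl, hS⟩
      omega
    -- pair condition
    have P : ∀ u v : V, u ≠ v →
        mrep G u (Finset.univ \ {u, v}) = mrep G v (Finset.univ \ {u, v}) := by
      intro u v huv
      by_contra hnem
      have hOMR : IsOMR G (Finset.univ \ {u, v}) := by
        intro a ha b hb hab
        have ha2 : a ∈ ({u, v} : Finset V) := by
          by_contra hh
          exact ha (Finset.mem_sdiff.mpr ⟨Finset.mem_univ a, hh⟩)
        have hb2 : b ∈ ({u, v} : Finset V) := by
          by_contra hh
          exact hb (Finset.mem_sdiff.mpr ⟨Finset.mem_univ b, hh⟩)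
        have ha' : a = u ∨ a = v := by simpa using ha2
        have hb' : b = u ∨ b = v := by simpa using hb2
        rcases ha' with rfl | rfl <;> rcases hb' with rfl | rfl
        · rfl
        · exact absurd hab hnem
        · exact absurd hab.symm hnem
        · rfl
      have hc : (Finset.univ \ ({u, v} : Finset V)).card = n - 2 := by
        rw [Finset.card_sdiff_of_subset (Finset.subset_univ _), Finset.card_pair huv, Finset.card_univ]
      have := K _ hOMR
      omega
    -- regularity
    have hdeg : ∀ u v : V, G.degree u = G.degree v := by
      intro u v
      rcases eq_or_ne u v with rfl | huv
      · rfl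
      have hP := P u v huv
      have hc := congrArg (Multiset.count 1) hP
      rw [mrep_count, mrep_count] at hc
      have hfa : ∀ a : V, ((Finset.univ \ ({u, v} : Finset V)).filter
          fun w => G.dist a w = 1) = ((Finset.univ \ ({u, v} : Finset V)).filter (G.Adj a)) := by
        intro a
        apply Finset.filter_congr
        intro w _
        simp [SimpleGraph.dist_eq_one_iff_adj]
      rw [hfa, hfa] at hc
      have hsplit : ∀ a : V, (Finset.univ.filter (G.Adj a)).card =
          ((Finset.univ \ ({u, v} : Finset V)).filter (G.Adj a)).card +
          (({u, v} : Finset V).filter (G.Adj a)).card := by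
        intro a
        rw [← Finset.card_union_of_disjoint
          (Finset.disjoint_filter_filter Finset.sdiff_disjoint),
          ← Finset.filter_union, Finset.sdiff_union_of_subset (Finset.subset_univ _)]
      have hdege : ∀ a : V, G.degree a = (Finset.univ.filter (G.Adj a)).card := by
        intro a
        rw [← SimpleGraph.neighborFinset_eq_filter]
        rfl
      have hpu : (({u, v} : Finset V).filter (G.Adj u)).card =
          (({u, v} : Finset V).filter (G.Adj v)).card := by
        by_cases hadj : G.Adj u v
        · rw [Finset.filter_insert, Finset.filter_insert]
          simp [G.irrefl, hadj, hadj.symm, Finset.filter_singleton, huv]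
        · rw [Finset.filter_insert, Finset.filter_insert]
          simp [G.irrefl, hadj, show ¬ G.Adj v u from fun h => hadj h.symm,
            Finset.filter_singleton]
      have h1 := hsplit u
      have h2 := hsplit v
      have h3 := hdege u
      have h4 := hdege v
      omega
    -- constant transmission
    have hsig : ∀ u v : V, (∑ w, G.dist u w) = ∑ w, G.dist v w := by
      intro u v
      rcases eq_or_ne u v with rfl | huv
      · rfl
      have hP := P u v huv
      have hs := congrArg Multiset.sum hP
      rw [mrep_sum, mrep_sum] at hs
      have hu : (∑ w ∈ Finset.univ \ ({u, v} : Finset V), G.dist u w) +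
          (∑ w ∈ ({u, v} : Finset V), G.dist u w) = ∑ w, G.dist u w :=
        Finset.sum_sdiff (Finset.subset_univ _)
      have hv : (∑ w ∈ Finset.univ \ ({u, v} : Finset V), G.dist v w) +
          (∑ w ∈ ({u, v} : Finset V), G.dist v w) = ∑ w, G.dist v w :=
        Finset.sum_sdiff (Finset.subset_univ _)
      have hpu : (∑ w ∈ ({u, v} : Finset V), G.dist u w) = G.dist u u + G.dist u v :=
        Finset.sum_pair huv
      have hpv : (∑ w ∈ ({u, v} : Finset V), G.dist v w) = G.dist v u + G.dist v v :=
        Finset.sum_pair huv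
      have hcomm : G.dist u v = G.dist v u := G.dist_comm
      have h0u : G.dist u u = 0 := G.dist_self
      have h0v : G.dist v v = 0 := G.dist_self
      omega
    refine ⟨⟨G.degree v0, fun v => hdeg v v0⟩, ?_⟩
    -- diameter at most 2
    by_contra hd
    have hex : ∃ p : V × V, ¬ (G.dist p.1 p.2 ≤ 2) := by
      by_contra hall
      push_neg at hall
      exact hd (Finset.sup_le fun p _ => hall p)
    obtain ⟨⟨a, b⟩, hab⟩ := hex
    have hab' : 2 < G.dist a b := by simpa using hab
    obtain ⟨c, hc⟩ := omr_exists_dist_eq G hconn (G.dist a b) a b rfl 3 (by omega)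
    obtain ⟨x1, hadj, hx1c⟩ := omr_exists_adj_dist G hconn (show G.dist a c = 2 + 1 from hc)
    have hax1 : G.dist a x1 = 1 := SimpleGraph.dist_eq_one_iff_adj.mpr hadj
    have hac : a ≠ c := fun hh => by rw [hh, G.dist_self] at hc; omega
    have hax : a ≠ x1 := hadj.ne
    have hxc : x1 ≠ c := fun hh => by rw [hh, G.dist_self] at hx1c; omega
    set T : Finset V := {a, x1, c} with hT
    set S : Finset V := Finset.univ \ T with hS
    have hTcard : T.card = 3 := by
      rw [hT, Finset.card_insert_of_notMem (by simp [hax, hac]), Finset.card_pair hxc]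
    have hsum : ∀ z : V, (∑ w ∈ S, G.dist z w) + (∑ w ∈ T, G.dist z w) = ∑ w, G.dist z w :=
      fun z => Finset.sum_sdiff (Finset.subset_univ T)
    have hTsum : ∀ z : V, ∑ w ∈ T, G.dist z w = G.dist z a + G.dist z x1 + G.dist z c := by
      intro z
      rw [hT, Finset.sum_insert (by simp [hax, hac]), Finset.sum_pair hxc]
      ring
    have ta : ∑ w ∈ T, G.dist a w = 4 := by
      rw [hTsum, G.dist_self, hax1, hc]
    have tx : ∑ w ∈ T, G.dist x1 w = 3 := by
      rw [hTsum, G.dist_comm, hax1, G.dist_self, hx1c]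
    have tc : ∑ w ∈ T, G.dist c w = 5 := by
      rw [hTsum, G.dist_comm, hc, G.dist_comm, hx1c, G.dist_self]
    have hOMR : IsOMR G S := by
      intro y hy z hz hm
      have hsumeq := congrArg Multiset.sum hm
      rw [mrep_sum, mrep_sum] at hsumeq
      have hyT : y ∈ T := by
        by_contra hh
        exact hy (Finset.mem_sdiff.mpr ⟨Finset.mem_univ y, hh⟩)
      have hzT : z ∈ T := by
        by_contra hh
        exact hz (Finset.mem_sdiff.mpr ⟨Finset.mem_univ z, hh⟩)
      have hy' : y = a ∨ y = x1 ∨ y = c := by simpa [hT] using hyT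
      have hz' : z = a ∨ z = x1 ∨ z = c := by simpa [hT] using hzT
      have hTeq : ∑ w ∈ T, G.dist y w = ∑ w ∈ T, G.dist z w := by
        have h1 := hsum y
        have h2 := hsum z
        have h3 := hsig y z
        omega
      rcases hy' with rfl | rfl | rfl <;> rcases hz' with rfl | rfl | rfl <;>
        first
          | rfl
          | (exfalso; omega)
    have hScard : S.card = n - 3 := by
      rw [hS, Finset.card_sdiff_of_subset (Finset.subset_univ T), hTcard, Finset.card_univ]
    have h3n : 3 ≤ n := by
      have := Finset.card_le_card (Finset.subset_univ T)
      rw [hTcard, Finset.card_univ] at this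
      omega
    have := K S hOMR
    omega
  · -- backward direction
    rintro ⟨⟨r, hreg⟩, hdiam⟩
    refine le_antisymm hub ?_
    have hmem : dimMS G ∈ {m | ∃ S : Finset V, S.card = m ∧ IsOMR G S} :=
      Nat.sInf_mem ⟨n - 1, Finset.univ.erase v0, hcard0, hOMR0⟩
    obtain ⟨S, hScard, hSomr⟩ := hmem
    rw [← hScard]
    by_contra hlt
    push_neg at hlt
    set T : Finset V := Sᶜ with hT
    have hTcard : T.card = n - S.card := Finset.card_compl S
    have hSn : S.card ≤ n := by
      have := Finset.card_le_card (Finset.subset_univ S)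
      rwa [Finset.card_univ] at this
    have hT2 : 2 ≤ T.card := by omega
    obtain ⟨u, hu, v, hv, huv, hdeq⟩ := exists_same_deg G T hT2
    have hus : u ∉ S := Finset.mem_compl.mp hu
    have hvs : v ∉ S := Finset.mem_compl.mp hv
    have hbound : ∀ a : V, a ∉ S → ∀ x ∈ mrep G a S, x = 1 ∨ x = 2 := by
      intro a has x hx
      rw [mrep, Multiset.mem_map] at hx
      obtain ⟨w, hw, rfl⟩ := hx
      have hwS : w ∈ S := hw
      have hnew : a ≠ w := fun hh => has (hh ▸ hwS)
      have h1 : 0 < G.dist a w := hconn.pos_dist_of_ne hnew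
      have h2 : G.dist a w ≤ 2 := by
        refine le_trans ?_ hdiam
        exact Finset.le_sup (f := fun p : V × V => G.dist p.1 p.2) (Finset.mem_univ (a, w))
      omega
    have hcount : ∀ a : V, (S.filter (G.Adj a)).card + (T.filter (G.Adj a)).card = r := by
      intro a
      have hu2 : (Finset.univ.filter (G.Adj a)).card =
          (S.filter (G.Adj a)).card + (T.filter (G.Adj a)).card := by
        rw [← Finset.card_union_of_disjoint
          (Finset.disjoint_filter_filter disjoint_compl_right),
          ← Finset.filter_union, Finset.union_compl]
      have hu3 : (Finset.univ.filter (G.Adj a)).card = r := by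
        rw [← SimpleGraph.neighborFinset_eq_filter]
        exact hreg a
      omega
    have hmr : mrep G u S = mrep G v S := by
      apply multiset_eq_12 (hbound u hus) (hbound v hvs)
      · rw [mrep_card, mrep_card]
      · rw [mrep_count, mrep_count]
        have hfa : ∀ a : V, (S.filter fun w => G.dist a w = 1) = S.filter (G.Adj a) := by
          intro a
          apply Finset.filter_congr
          intro w _
          simp [SimpleGraph.dist_eq_one_iff_adj]
        rw [hfa, hfa]
        have h1 := hcount u
        have h2 := hcount v
        omega
    exact huv (hSomr u hus v hvs hmr)
end

section
/- Let G be a connected graph and let u, v ∈ V(G) be vertices with deg_G(u) ≠ deg_G(v). Then V(G) \ {u, v} is an outer multiset resolving set of G; in particular, dim_ms(G) ≤ n(G) - 2. -/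
open SimpleGraph

open Finset

/-! The vertices at distance one from `u` are its neighbours, so the multiplicity of `1` in the
multiset representation of `u` with respect to `V \ {u, v}` is `deg u`, less one if `u ~ v`.
Adjacency being symmetric, equal representations of `u` and `v` force `deg u = deg v`; and `u`, `v`
are the only vertices outside `V \ {u, v}`. -/

namespace SimpleGraph

variable {V : Type*} (G : SimpleGraph V)

lemma count_one_mrep [DecidableRel G.Adj] (u : V) (S : Finset V) :
    (mrep G u S).count 1 = #{w ∈ S | G.Adj u w} := by
  rw [mrep, Multiset.count_map, ← filter_val, card_val]
  simp only [eq_comm (a := 1), dist_eq_one_iff_adj]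

lemma filter_adj_univ_sdiff_pair [Fintype V] [DecidableEq V] [DecidableRel G.Adj] (u v : V) :
    ({w ∈ univ \ {u, v} | G.Adj u w} : Finset V) = (G.neighborFinset u).erase v := by
  ext w
  simp only [mem_filter, mem_sdiff, mem_univ, mem_insert, mem_singleton, mem_erase,
    mem_neighborFinset, true_and]
  constructor
  · rintro ⟨hw, hadj⟩
    exact ⟨fun h => hw (Or.inr h), hadj⟩
  · rintro ⟨hwv, hadj⟩
    exact ⟨fun h => h.elim (fun hwu => G.ne_of_adj hadj hwu.symm) hwv, hadj⟩

lemma count_one_mrep_univ_sdiff_pair_add [Fintype V] [DecidableEq V] [DecidableRel G.Adj]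
    (u v : V) :
    (mrep G u (univ \ {u, v})).count 1 + (if G.Adj u v then 1 else 0) = G.degree u := by
  rw [count_one_mrep, filter_adj_univ_sdiff_pair, ← card_neighborFinset_eq_degree]
  split_ifs with hadj
  · exact card_erase_add_one ((mem_neighborFinset G u v).mpr hadj)
  · rw [erase_eq_of_notMem ((mem_neighborFinset G u v).not.mpr hadj), add_zero]

lemma mrep_univ_sdiff_pair_ne_of_degree_ne [Fintype V] [DecidableEq V] [DecidableRel G.Adj]
    {u v : V} (hdeg : G.degree u ≠ G.degree v) :
    mrep G u (univ \ {u, v}) ≠ mrep G v (univ \ {u, v}) := by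
  intro h
  have hu := G.count_one_mrep_univ_sdiff_pair_add u v
  have hv := G.count_one_mrep_univ_sdiff_pair_add v u
  rw [pair_comm, ← h] at hv
  simp only [G.adj_comm v u] at hv
  exact hdeg (hu.symm.trans hv)

lemma isOMR_univ_sdiff_pair [Fintype V] [DecidableEq V] {u v : V}
    (h : mrep G u (univ \ {u, v}) ≠ mrep G v (univ \ {u, v})) :
    IsOMR G (univ \ {u, v}) := by
  have houtside : ∀ a ∉ (univ \ {u, v} : Finset V), a = u ∨ a = v := by
    simp only [mem_sdiff, mem_univ, mem_insert, mem_singleton, true_and, not_not]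
    exact fun _ => id
  intro a ha b hb hab
  rcases houtside a ha with rfl | rfl <;> rcases houtside b hb with rfl | rfl
  · rfl
  · exact absurd hab h
  · exact absurd hab.symm h
  · rfl

lemma dimMS_le_card [Fintype V] {S : Finset V} (hS : IsOMR G S) : dimMS G ≤ #S :=
  Nat.sInf_le ⟨S, rfl, hS⟩

end SimpleGraph

theorem stmt_1_general (V : Type*) [Fintype V] [DecidableEq V] (G : SimpleGraph V) [DecidableRel G.Adj]
    (u v : V) (hdeg : G.degree u ≠ G.degree v) :
    IsOMR G (Finset.univ \ {u, v}) ∧ dimMS G ≤ Fintype.card V - 2 := by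
  have huv : u ≠ v := fun h => hdeg (h ▸ rfl)
  have homr := G.isOMR_univ_sdiff_pair (G.mrep_univ_sdiff_pair_ne_of_degree_ne hdeg)
  refine ⟨homr, ?_⟩
  calc dimMS G ≤ #(univ \ {u, v}) := G.dimMS_le_card homr
    _ = Fintype.card V - 2 := by
      rw [card_univ_sdiff, card_pair huv]

theorem stmt_1 (V : Type*) [Fintype V] [DecidableEq V] (G : SimpleGraph V) [DecidableRel G.Adj]
    (hconn : G.Connected) (u v : V) (hdeg : G.degree u ≠ G.degree v) :
    IsOMR G (Finset.univ \ {u, v}) ∧ dimMS G ≤ Fintype.card V - 2 :=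
  stmt_1_general V G u v hdeg
end

section
/- If G is a connected graph of order n(G) ≥ 2 with dim_ms(G) = n(G) - 1, then every vertex of G is diametral, i.e., for every u ∈ V(G) there exists v ∈ V(G) with d_G(u,v) = diam(G). -/
open SimpleGraph

theorem stmt_2 (V : Type*) [Fintype V] (G : SimpleGraph V)
    (hconn : G.Connected) (hn : 2 ≤ Fintype.card V)
    (hdim : dimMS G = Fintype.card V - 1) :
    ∀ u : V, ∃ v : V, G.dist u v = gdiam G := by
  classical
  have hne : Nonempty V := Fintype.card_pos_iff.mp (by omega)
  intro u
  by_contra h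
  push_neg at h
  have hle : ∀ a b : V, G.dist a b ≤ gdiam G := fun a b =>
    Finset.le_sup (f := fun p : V × V => G.dist p.1 p.2) (Finset.mem_univ (a, b))
  have hlt : ∀ v : V, G.dist u v < gdiam G := fun v => lt_of_le_of_ne (hle u v) (h v)
  obtain ⟨⟨x, y⟩, -, hxy⟩ := Finset.exists_mem_eq_sup Finset.univ
    (Finset.univ_nonempty) (fun p : V × V => G.dist p.1 p.2)
  have hxy : G.dist x y = gdiam G := hxy.symm
  have hdpos : 0 < gdiam G := lt_of_le_of_lt (Nat.zero_le _) (hlt u)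
  have hux : u ≠ x := by
    rintro rfl
    exact h y hxy
  have hyu : y ≠ u := by
    rintro rfl
    exact h x ((G.dist_comm).trans hxy)
  have hyx : y ≠ x := by
    rintro rfl
    simp [SimpleGraph.dist_self] at hxy
    omega
  set S : Finset V := Finset.univ \ {u, x} with hS
  have hyS : y ∈ S := by simp [hS, hyu, hyx]
  have hkey : mrep G u S ≠ mrep G x S := by
    intro heq
    have hmem : gdiam G ∈ mrep G x S := by
      rw [mrep]
      exact Multiset.mem_map.2 ⟨y, hyS, hxy⟩
    rw [← heq, mrep, Multiset.mem_map] at hmem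
    obtain ⟨w, -, hw⟩ := hmem
    exact absurd hw (Nat.ne_of_lt (hlt w))
  have homr : IsOMR G S := by
    intro a ha b hb heq
    have ha' : a = u ∨ a = x := by
      by_contra hc
      push_neg at hc
      exact ha (by simp [hS, hc.1, hc.2])
    have hb' : b = u ∨ b = x := by
      by_contra hc
      push_neg at hc
      exact hb (by simp [hS, hc.1, hc.2])
    rcases ha' with rfl | rfl <;> rcases hb' with rfl | rfl
    · rfl
    · exact absurd heq hkey
    · exact absurd heq.symm hkey
    · rfl
  have hcard : S.card = Fintype.card V - 2 := by
    rw [hS, Finset.card_sdiff_of_subset (Finset.subset_univ _), Finset.card_univ,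
      Finset.card_pair hux]
  have hle2 : dimMS G ≤ Fintype.card V - 2 :=
    Nat.sInf_le ⟨S, hcard, homr⟩
  omega
end

section
/- If G is a connected r-regular graph with r ≥ 3 and dim_ms(G) = n(G) - 1, then diam(G) ≤ 2. -/
open SimpleGraph

lemma mrep_split {V : Type*} [Fintype V] [DecidableEq V] (G : SimpleGraph V) (u : V)
    (T : Finset V) :
    mrep G u Finset.univ = mrep G u (Finset.univ \ T) + mrep G u T := by
  unfold mrep
  rw [← Multiset.map_add, Finset.sdiff_val,
    tsub_add_cancel_of_le (Finset.val_le_iff.mpr (Finset.subset_univ T))]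

lemma mrep_insert {V : Type*} [DecidableEq V] (G : SimpleGraph V) (u x : V) (s : Finset V)
    (h : x ∉ s) : mrep G u (insert x s) = G.dist u x ::ₘ mrep G u s := by
  unfold mrep
  rw [Finset.insert_val_of_notMem h, Multiset.map_cons]

lemma mrep_singleton {V : Type*} (G : SimpleGraph V) (u x : V) :
    mrep G u {x} = {G.dist u x} := rfl

theorem stmt_3 (V : Type*) [Fintype V] (G : SimpleGraph V) [DecidableRel G.Adj]
    (hconn : G.Connected) (r : ℕ) (hr : 3 ≤ r) (hreg : G.IsRegularOfDegree r)
    (hdim : dimMS G = Fintype.card V - 1) :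
    gdiam G ≤ 2 := by
  classical
  by_contra hcon
  push_neg at hcon
  have h3 : 3 ≤ gdiam G := hcon
  unfold gdiam at h3
  rw [Finset.le_sup_iff (by norm_num : (0:ℕ) < 3)] at h3
  obtain ⟨⟨x, y⟩, -, hxy3⟩ := h3
  simp only at hxy3
  set D := G.dist x y with hD
  obtain ⟨p, hp⟩ := hconn.exists_walk_length_eq_dist x y
  set w := p.getVert 1 with hwdef
  have hadj : G.Adj x w := by
    have h0 := p.adj_getVert_succ (i := 0) (by omega)
    simpa using h0
  have hxw : G.dist x w = 1 := dist_eq_one_iff_adj.mpr hadj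
  have hnil : ¬ p.Nil := by
    rw [SimpleGraph.Walk.not_nil_iff_lt_length]
    omega
  have htail : p.tail.length + 1 = p.length := SimpleGraph.Walk.length_tail_add_one hnil
  have hwy_le : G.dist w y ≤ D - 1 := by
    have h1 : G.dist w y ≤ p.tail.length := SimpleGraph.dist_le p.tail
    omega
  have hwy : G.dist w y = D - 1 := by
    have htri := hconn.dist_triangle (u := x) (v := w) (w := y)
    omega
  have hxwne : x ≠ w := hadj.ne
  have hxyne : x ≠ y := by
    intro h; rw [h] at hD; simp [SimpleGraph.dist_self] at hD; omega
  have hwyne : w ≠ y := by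
    intro h; rw [h] at hwy; simp [SimpleGraph.dist_self] at hwy; omega
  have hxx : G.dist x x = 0 := SimpleGraph.dist_self
  have hww : G.dist w w = 0 := SimpleGraph.dist_self
  have hyy : G.dist y y = 0 := SimpleGraph.dist_self
  have hwx : G.dist w x = 1 := by rw [SimpleGraph.dist_comm]; exact hxw
  have hyx : G.dist y x = D := by rw [SimpleGraph.dist_comm]
  have hyw : G.dist y w = D - 1 := by rw [SimpleGraph.dist_comm]; exact hwy
  by_cases hall : ∀ u v : V, mrep G u Finset.univ = mrep G v Finset.univ
  · -- all full representations equal; use S = univ \ {x, w, y}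
    set T : Finset V := {x, w, y} with hT
    have hxmem : x ∉ ({w, y} : Finset V) := by
      simp only [Finset.mem_insert, Finset.mem_singleton]
      push_neg
      exact ⟨hxwne, hxyne⟩
    have hwmem : w ∉ ({y} : Finset V) := by
      simp only [Finset.mem_singleton]; exact hwyne
    have hTcard : T.card = 3 := by
      rw [hT, Finset.card_insert_of_notMem hxmem,
        Finset.card_insert_of_notMem hwmem, Finset.card_singleton]
    have hmem : ∀ a : V, a ∉ Finset.univ \ T → a = x ∨ a = w ∨ a = y := by
      intro a ha
      simp only [Finset.mem_sdiff, Finset.mem_univ, true_and, not_not] at ha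
      simpa [hT] using ha
    have hrepval : ∀ a : V, mrep G a T = G.dist a x ::ₘ G.dist a w ::ₘ {G.dist a y} := by
      intro a
      rw [hT, mrep_insert _ _ _ _ hxmem, mrep_insert _ _ _ _ hwmem, mrep_singleton]
    have rX : mrep G x T = (0 ::ₘ 1 ::ₘ {D}) := by
      rw [hrepval x, hxx, hxw, ← hD]
    have rW : mrep G w T = (1 ::ₘ 0 ::ₘ {D - 1}) := by
      rw [hrepval w, hww, hwx, hwy]
    have rY : mrep G y T = (D ::ₘ (D - 1) ::ₘ {0}) := by
      rw [hrepval y, hyy, hyx, hyw]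
    have neXW : (0 ::ₘ 1 ::ₘ {D} : Multiset ℕ) ≠ (1 ::ₘ 0 ::ₘ {D - 1}) := by
      intro h
      have hc := congrArg (Multiset.count D) h
      simp only [Multiset.count_cons, Multiset.count_singleton] at hc
      split_ifs at hc <;> omega
    have neXY : (0 ::ₘ 1 ::ₘ {D} : Multiset ℕ) ≠ (D ::ₘ (D - 1) ::ₘ {0}) := by
      intro h
      have hc := congrArg (Multiset.count 1) h
      simp only [Multiset.count_cons, Multiset.count_singleton] at hc
      split_ifs at hc <;> omega
    have neWY : (1 ::ₘ 0 ::ₘ {D - 1} : Multiset ℕ) ≠ (D ::ₘ (D - 1) ::ₘ {0}) := by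
      intro h
      have hc := congrArg (Multiset.count 1) h
      simp only [Multiset.count_cons, Multiset.count_singleton] at hc
      split_ifs at hc <;> omega
    have homr : IsOMR G (Finset.univ \ T) := by
      intro a ha b hb heq
      have hTab : mrep G a T = mrep G b T := by
        have h1 := mrep_split G a T
        have h2 := mrep_split G b T
        rw [hall a b, h2, heq] at h1
        exact (add_left_cancel h1).symm
      rcases hmem a ha with ha' | ha' | ha' <;> rcases hmem b hb with hb' | hb' | hb'
      · exact ha'.trans hb'.symm
      · exfalso; rw [ha', hb', rX, rW] at hTab; exact neXW hTab
      · exfalso; rw [ha', hb', rX, rY] at hTab; exact neXY hTab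
      · exfalso; rw [ha', hb', rW, rX] at hTab; exact neXW hTab.symm
      · exact ha'.trans hb'.symm
      · exfalso; rw [ha', hb', rW, rY] at hTab; exact neWY hTab
      · exfalso; rw [ha', hb', rY, rX] at hTab; exact neXY hTab.symm
      · exfalso; rw [ha', hb', rY, rW] at hTab; exact neWY hTab.symm
      · exact ha'.trans hb'.symm
    have hle : dimMS G ≤ (Finset.univ \ T).card :=
      Nat.sInf_le ⟨Finset.univ \ T, rfl, homr⟩
    have hcard : (Finset.univ \ T).card = Fintype.card V - 3 := by
      rw [Finset.card_sdiff_of_subset (Finset.subset_univ T), hTcard, Finset.card_univ]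
    have hn : 3 ≤ Fintype.card V := by
      rw [← hTcard, ← Finset.card_univ]; exact Finset.card_le_univ T
    omega
  · push_neg at hall
    obtain ⟨u, v, hne⟩ := hall
    have huv : u ≠ v := by rintro rfl; exact hne rfl
    set T : Finset V := {u, v} with hT
    have humem : u ∉ ({v} : Finset V) := by
      simp only [Finset.mem_singleton]; exact huv
    have hTcard : T.card = 2 := by rw [hT]; exact Finset.card_pair huv
    have hmem : ∀ a : V, a ∉ Finset.univ \ T → a = u ∨ a = v := by
      intro a ha
      simp only [Finset.mem_sdiff, Finset.mem_univ, true_and, not_not] at ha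
      simpa [hT] using ha
    have hrepval : ∀ a : V, mrep G a T = G.dist a u ::ₘ {G.dist a v} := by
      intro a
      rw [hT, mrep_insert _ _ _ _ humem, mrep_singleton]
    have hTuv : mrep G u T = mrep G v T := by
      rw [hrepval u, hrepval v, SimpleGraph.dist_self, SimpleGraph.dist_self,
        SimpleGraph.dist_comm]
      exact Multiset.cons_swap _ _ _
    have homr : IsOMR G (Finset.univ \ T) := by
      intro a ha b hb heq
      rcases hmem a ha with ha' | ha' <;> rcases hmem b hb with hb' | hb'
      · exact ha'.trans hb'.symm
      · exfalso
        rw [ha', hb'] at heq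
        apply hne
        rw [mrep_split G u T, mrep_split G v T, heq, hTuv]
      · exfalso
        rw [ha', hb'] at heq
        apply hne
        rw [mrep_split G u T, mrep_split G v T, heq.symm, hTuv]
      · exact ha'.trans hb'.symm
    have hle : dimMS G ≤ (Finset.univ \ T).card :=
      Nat.sInf_le ⟨Finset.univ \ T, rfl, homr⟩
    have hcard : (Finset.univ \ T).card = Fintype.card V - 2 := by
      rw [Finset.card_sdiff_of_subset (Finset.subset_univ T), hTcard, Finset.card_univ]
    have hn : 2 ≤ Fintype.card V := by
      rw [← hTcard, ← Finset.card_univ]; exact Finset.card_le_univ T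
    omega
end

section
/- If G is a connected r-regular graph with r ≥ 3 and diam(G) = 2, then dim_ms(G) = n(G) - 1. -/
open SimpleGraph

/-!
In a connected graph of diameter 2 a vertex `u ∉ S` sees each `w ∈ S` at distance 1 or 2, so
`m(u|S)` only records how many neighbours `u` has in `S`. If `G` is moreover regular, that number
is determined by the number of neighbours of `u` in `T = V \ S`. A resolving set `S` therefore
forces the degrees in the induced subgraph `G[T]` to be pairwise distinct, which is impossible
once `|T| ≥ 2` (no graph on at least two vertices has all degrees distinct). Conversely, the
complement of a single vertex is trivially resolving.
-/

open Finset

namespace SimpleGraph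

variable {V : Type*} [DecidableEq V] (G : SimpleGraph V) [DecidableRel G.Adj]

theorem card_filter_adj_add_card_filter_adj_compl [Fintype V] (S : Finset V) (u : V) :
    #{w ∈ S | G.Adj u w} + #{w ∈ Sᶜ | G.Adj u w} = G.degree u := by
  rw [← card_neighborFinset_eq_degree, neighborFinset_eq_filter,
    ← card_union_of_disjoint (disjoint_filter_filter disjoint_compl_right), ← filter_union,
    union_compl]

theorem filter_adj_subset_erase (T : Finset V) (u : V) : {w ∈ T | G.Adj u w} ⊆ T.erase u :=
  fun w hw => by
    rw [mem_filter] at hw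
    exact mem_erase.mpr ⟨(G.ne_of_adj hw.2).symm, hw.1⟩

theorem card_filter_adj_lt {T : Finset V} {u : V} (hu : u ∈ T) : #{w ∈ T | G.Adj u w} < #T :=
  (card_le_card (G.filter_adj_subset_erase T u)).trans_lt (card_erase_lt_of_mem hu)

theorem adj_of_card_filter_adj_eq_card_sub_one {T : Finset V} {u v : V} (hu : u ∈ T)
    (hv : v ∈ T) (huv : u ≠ v) (hfull : #{w ∈ T | G.Adj u w} = #T - 1) : G.Adj u v := by
  have hsub := G.filter_adj_subset_erase T u
  have heq : {w ∈ T | G.Adj u w} = T.erase u :=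
    eq_of_subset_of_card_le hsub (by rw [card_erase_of_mem hu, hfull])
  have hv' : v ∈ T.erase u := mem_erase.mpr ⟨huv.symm, hv⟩
  rw [← heq, mem_filter] at hv'
  exact hv'.2

theorem exists_ne_card_filter_adj_eq {T : Finset V} (hT : 2 ≤ #T) :
    ∃ u ∈ T, ∃ v ∈ T, u ≠ v ∧ #{w ∈ T | G.Adj u w} = #{w ∈ T | G.Adj v w} := by
  -- A vertex of degree `#T - 1` rules out degree `0`, so at most `#T - 1` values occur.
  by_cases hfull : ∃ u ∈ T, #{w ∈ T | G.Adj u w} = #T - 1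
  · obtain ⟨u, hu, hdeg⟩ := hfull
    refine exists_ne_map_eq_of_card_lt_of_maps_to (t := Icc 1 (#T - 1))
      (by rw [Nat.card_Icc]; omega) fun v hv => ?_
    have hlt := G.card_filter_adj_lt hv
    simp only [coe_Icc, Set.mem_Icc]
    refine ⟨?_, by omega⟩
    rcases eq_or_ne v u with rfl | hvu
    · omega
    · have hadj := G.adj_of_card_filter_adj_eq_card_sub_one hu hv hvu.symm hdeg
      exact card_pos.mpr ⟨u, mem_filter.mpr ⟨hu, hadj.symm⟩⟩
  · push Not at hfull
    refine exists_ne_map_eq_of_card_lt_of_maps_to (t := range (#T - 1))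
      (by rw [card_range]; omega) fun v hv => ?_
    have hlt := G.card_filter_adj_lt hv
    have hne := hfull v hv
    simp only [coe_range, Set.mem_Iio]
    omega

end SimpleGraph

section

variable {V : Type*} [Fintype V] {G : SimpleGraph V}

theorem dist_le_gdiam (u w : V) : G.dist u w ≤ gdiam G :=
  Finset.le_sup (f := fun p : V × V => G.dist p.1 p.2) (mem_univ (u, w))

theorem dist_eq_one_or_two (hconn : G.Connected) (hdiam : gdiam G ≤ 2) {u w : V} (huw : u ≠ w) :
    G.dist u w = 1 ∨ G.dist u w = 2 := by
  have := hconn.pos_dist_of_ne huw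
  have := (dist_le_gdiam u w).trans hdiam
  omega

theorem mrep_eq_replicate [DecidableRel G.Adj] (hconn : G.Connected) (hdiam : gdiam G ≤ 2)
    {S : Finset V} {u : V} (hu : u ∉ S) :
    mrep G u S = Multiset.replicate #{w ∈ S | G.Adj u w} 1 +
      Multiset.replicate (#S - #{w ∈ S | G.Adj u w}) 2 := by
  have hfar : ∀ w ∈ {w ∈ S | ¬G.Adj u w}, G.dist u w = 2 := fun w hw => by
    rw [mem_filter] at hw
    have huw : u ≠ w := fun h => hu (h ▸ hw.1)
    have := dist_eq_one_or_two hconn hdiam huw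
    have := mt dist_eq_one_iff_adj.mp hw.2
    omega
  rw [← card_filter_add_card_filter_not (s := S) (G.Adj u), Nat.add_sub_cancel_left, mrep,
    ← Multiset.filter_add_not (G.Adj u) S.val, Multiset.map_add, ← filter_val, ← filter_val,
    Multiset.map_congr rfl fun w hw => dist_eq_one_iff_adj.mpr (mem_filter.mp hw).2,
    Multiset.map_congr rfl hfar, Multiset.map_const', Multiset.map_const']
  rfl

theorem isOMR_univ_erase [DecidableEq V] (x : V) : IsOMR G (univ.erase x) := by
  intro u hu v hv _
  simp only [mem_erase, mem_univ, and_true, not_not] at hu hv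
  rw [hu, hv]

theorem card_sub_one_le_card_of_isOMR [DecidableEq V] [DecidableRel G.Adj] (hconn : G.Connected)
    (hdiam : gdiam G ≤ 2) {r : ℕ} (hreg : G.IsRegularOfDegree r) {S : Finset V}
    (hS : IsOMR G S) : Fintype.card V - 1 ≤ #S := by
  by_contra! hlt
  obtain ⟨u, hu, v, hv, huv, hdegT⟩ :=
    G.exists_ne_card_filter_adj_eq (T := Sᶜ) (by rw [card_compl]; omega)
  have hdegS : #{w ∈ S | G.Adj u w} = #{w ∈ S | G.Adj v w} := by
    have hu' := G.card_filter_adj_add_card_filter_adj_compl S u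
    have hv' := G.card_filter_adj_add_card_filter_adj_compl S v
    rw [hreg.degree_eq] at hu' hv'
    omega
  rw [mem_compl] at hu hv
  exact huv (hS u hu v hv (by rw [mrep_eq_replicate hconn hdiam hu,
    mrep_eq_replicate hconn hdiam hv, hdegS]))

end

theorem stmt_4_general (V : Type*) [Fintype V] (G : SimpleGraph V) [DecidableRel G.Adj]
    (hconn : G.Connected) (r : ℕ) (hreg : G.IsRegularOfDegree r)
    (hdiam : gdiam G = 2) :
    dimMS G = Fintype.card V - 1 := by
  classical
  obtain ⟨x⟩ := hconn.nonempty
  refine IsLeast.csInf_eq ⟨⟨univ.erase x, by simp, isOMR_univ_erase x⟩, ?_⟩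
  rintro _ ⟨S, rfl, hS⟩
  exact card_sub_one_le_card_of_isOMR hconn hdiam.le hreg hS

theorem stmt_4 (V : Type*) [Fintype V] (G : SimpleGraph V) [DecidableRel G.Adj]
    (hconn : G.Connected) (r : ℕ) (hr : 3 ≤ r) (hreg : G.IsRegularOfDegree r)
    (hdiam : gdiam G = 2) :
    dimMS G = Fintype.card V - 1 :=
  stmt_4_general V G hconn r hreg hdiam
end

section
/- For every k ≥ 2 and r ≥ 1, the complete k-partite graph K_{r,...,r} with all k parts of size r satisfies dim_ms(K_{r,...,r}) = kr - 1. -/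
open SimpleGraph

/-!
In `K_{r,…,r}` two distinct vertices are at distance 1 if they lie in different parts and at
distance 2 otherwise, so the multiset representation of a vertex `u ∉ S` only records how many
vertices of `S` share the part of `u`. Two outside vertices in a common part are therefore never
resolved; and if every part contains at most one outside vertex, each outside vertex sees exactly
`r - 1` vertices of `S` in its part, so again all outside vertices look alike. Hence a resolving
set misses at most one vertex, while any set missing at most one vertex resolves trivially.
-/

lemma isOMR_of_card_le_card_add_one {V : Type*} [Fintype V] (G : SimpleGraph V) {S : Finset V}
    (hS : Fintype.card V ≤ S.card + 1) : IsOMR G S := by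
  classical
  have hSc : Sᶜ.card ≤ 1 := by rw [Finset.card_compl]; omega
  intro u hu v hv _
  exact Finset.card_le_one.1 hSc u (Finset.mem_compl.2 hu) v (Finset.mem_compl.2 hv)

lemma dimMS_eq_card_sub_one {V : Type*} [Fintype V] (G : SimpleGraph V)
    (h : ∀ S : Finset V, IsOMR G S → Fintype.card V ≤ S.card + 1) :
    dimMS G = Fintype.card V - 1 := by
  obtain ⟨S, -, hS⟩ := Finset.exists_subset_card_eq (s := Finset.univ)
    (Nat.sub_le (Fintype.card V) 1)
  have hmem : Fintype.card V - 1 ∈ {n | ∃ S : Finset V, S.card = n ∧ IsOMR G S} :=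
    ⟨S, hS, isOMR_of_card_le_card_add_one G (by omega)⟩
  refine le_antisymm (Nat.sInf_le hmem) ?_
  obtain ⟨T, hT, hTomr⟩ := Nat.sInf_mem ⟨_, hmem⟩
  have := h T hTomr
  unfold dimMS
  omega

namespace SimpleGraph.completeMultipartiteGraph

variable {ι α : Type*}

lemma dist_eq_one_of_fst_ne {u w : (_ : ι) × α} (h : u.1 ≠ w.1) :
    (completeMultipartiteGraph fun _ : ι => α).dist u w = 1 :=
  dist_eq_one_iff_adj.2 h

lemma dist_eq_two_of_fst_eq [Nontrivial ι] {u w : (_ : ι) × α} (hne : u ≠ w) (h : u.1 = w.1) :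
    (completeMultipartiteGraph fun _ : ι => α).dist u w = 2 := by
  obtain ⟨j, hj⟩ := exists_ne u.1
  have hu : (completeMultipartiteGraph fun _ : ι => α).Adj u ⟨j, u.2⟩ := hj.symm
  have hw : (completeMultipartiteGraph fun _ : ι => α).Adj ⟨j, u.2⟩ w :=
    show j ≠ w.1 from h ▸ hj
  have hle := dist_le (hu.toWalk.append hw.toWalk)
  have h0 : (completeMultipartiteGraph fun _ : ι => α).dist u w ≠ 0 :=
    (Reachable.dist_eq_zero_iff (hu.reachable.trans hw.reachable)).not.2 hne
  have h1 : (completeMultipartiteGraph fun _ : ι => α).dist u w ≠ 1 :=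
    dist_eq_one_iff_adj.not.2 (not_not.2 h)
  simp only [Walk.length_append, Adj.length_toWalk] at hle
  omega

lemma mrep_eq_replicate [Nontrivial ι] [DecidableEq ι] {S : Finset ((_ : ι) × α)}
    {u : (_ : ι) × α} (hu : u ∉ S) :
    mrep (completeMultipartiteGraph fun _ : ι => α) u S =
      Multiset.replicate {w ∈ S | w.1 = u.1}.card 2 +
        Multiset.replicate {w ∈ S | ¬w.1 = u.1}.card 1 := by
  rw [mrep, ← Multiset.filter_add_not (fun w => w.1 = u.1) S.val, Multiset.map_add]
  congr 1
  · rw [Multiset.map_congr rfl fun w hw => ?_, Multiset.map_const']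
    · rfl
    · obtain ⟨hwS, hwu⟩ := Multiset.mem_filter.1 hw
      exact dist_eq_two_of_fst_eq (fun h => hu (h ▸ hwS)) hwu.symm
  · rw [Multiset.map_congr rfl fun w hw => ?_, Multiset.map_const']
    · rfl
    · exact dist_eq_one_of_fst_ne fun h => (Multiset.mem_filter.1 hw).2 h.symm

lemma mrep_eq_mrep_of_card_filter_eq [Nontrivial ι] [DecidableEq ι] {S : Finset ((_ : ι) × α)}
    {u v : (_ : ι) × α} (hu : u ∉ S) (hv : v ∉ S)
    (h : {w ∈ S | w.1 = u.1}.card = {w ∈ S | w.1 = v.1}.card) :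
    mrep (completeMultipartiteGraph fun _ : ι => α) u S =
      mrep (completeMultipartiteGraph fun _ : ι => α) v S := by
  have h' : {w ∈ S | ¬w.1 = u.1}.card = {w ∈ S | ¬w.1 = v.1}.card := by
    have := S.card_filter_add_card_filter_not fun w => w.1 = u.1
    have := S.card_filter_add_card_filter_not fun w => w.1 = v.1
    omega
  rw [mrep_eq_replicate hu, mrep_eq_replicate hv, h, h']

lemma card_filter_fst_eq [Fintype ι] [DecidableEq ι] [Fintype α] (i : ι) :
    (Finset.univ.filter fun w : (_ : ι) × α => w.1 = i).card = Fintype.card α := by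
  have : (Finset.univ.filter fun w : (_ : ι) × α => w.1 = i) =
      Finset.univ.map (Function.Embedding.sigmaMk i) := by
    ext ⟨j, a⟩
    simp [eq_comm]
  rw [this, Finset.card_map, Finset.card_univ]

theorem card_le_card_add_one_of_isOMR [Fintype ι] [Nontrivial ι] [Fintype α]
    {S : Finset ((_ : ι) × α)} (hS : IsOMR (completeMultipartiteGraph fun _ : ι => α) S) :
    Fintype.card ((_ : ι) × α) ≤ S.card + 1 := by
  classical
  have unique_outside : ∀ u ∉ S, ∀ v ∉ S, u.1 = v.1 → u = v := fun u hu v hv h =>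
    hS u hu v hv (mrep_eq_mrep_of_card_filter_eq hu hv (by rw [h]))
  have count : ∀ u ∉ S, {w ∈ S | w.1 = u.1}.card + 1 = Fintype.card α := by
    intro u hu
    have hout : {w ∈ Sᶜ | w.1 = u.1} = {u} := by
      ext w
      simp only [Finset.mem_filter, Finset.mem_compl, Finset.mem_singleton]
      exact ⟨fun ⟨hw, h⟩ => unique_outside w hw u hu h, by rintro rfl; exact ⟨hu, rfl⟩⟩
    rw [← card_filter_fst_eq u.1, ← Finset.card_singleton u, ← hout,
      ← Finset.card_union_of_disjoint (Finset.disjoint_filter_filter disjoint_compl_right),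
      ← Finset.filter_union, Finset.union_compl]
  have hSc : Sᶜ.card ≤ 1 := Finset.card_le_one.2 fun u hu v hv => by
    rw [Finset.mem_compl] at hu hv
    have := count u hu
    have := count v hv
    exact hS u hu v hv (mrep_eq_mrep_of_card_filter_eq hu hv (by omega))
  rw [Finset.card_compl] at hSc
  omega

end SimpleGraph.completeMultipartiteGraph

theorem stmt_5_general (k r : ℕ) (hk : 2 ≤ k) :
    dimMS (completeMultipartiteGraph fun _ : Fin k => Fin r) = k * r - 1 := by
  have : Nontrivial (Fin k) := Fin.nontrivial_iff_two_le.2 hk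
  rw [dimMS_eq_card_sub_one _ fun _ => completeMultipartiteGraph.card_le_card_add_one_of_isOMR]
  simp

theorem stmt_5 (k r : ℕ) (hk : 2 ≤ k) (hr : 1 ≤ r) :
    dimMS (completeMultipartiteGraph fun _ : Fin k => Fin r) = k * r - 1 :=
  stmt_5_general k r hk
end

section
/- For every k ≥ 2 and integers 2 ≤ r_1 < r_2 < ⋯ < r_k, the complete k-partite graph K_{r_1,...,r_k} satisfies dim_ms(K_{r_1,...,r_k}) = r_1 + r_2 + ⋯ + r_k − k. -/
open SimpleGraph

open Finset

variable {k : ℕ} {r : Fin k → ℕ}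

private lemma cmp_adj (u v : Σ i, Fin (r i)) :
    (completeMultipartiteGraph fun i : Fin k => Fin (r i)).Adj u v ↔ u.1 ≠ v.1 := by
  simp

private lemma cmp_dist (hk : 2 ≤ k) (hr : ∀ i, 1 ≤ r i) (u v : Σ i, Fin (r i)) (h : u ≠ v) :
    (completeMultipartiteGraph fun i : Fin k => Fin (r i)).dist u v
      = if u.1 = v.1 then 2 else 1 := by
  set G := completeMultipartiteGraph fun i : Fin k => Fin (r i)
  by_cases hp : u.1 = v.1
  · simp only [hp, if_true]
    obtain ⟨j, hj⟩ : ∃ j : Fin k, j ≠ u.1 := by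
      by_cases h0 : u.1 = ⟨0, by omega⟩
      · exact ⟨⟨1, by omega⟩, by rw [h0]; simp [Fin.ext_iff]⟩
      · exact ⟨⟨0, by omega⟩, fun hh => h0 hh.symm⟩
    set w : Σ i, Fin (r i) := ⟨j, ⟨0, hr j⟩⟩ with hw
    have h1 : G.Adj u w := by rw [cmp_adj]; exact fun hh => hj hh.symm
    have h2 : G.Adj w v := by rw [cmp_adj]; rw [← hp]; exact fun hh => hj hh
    have hle : G.dist u v ≤ 2 := by
      have := SimpleGraph.dist_le (SimpleGraph.Walk.cons h1 (SimpleGraph.Walk.cons h2 SimpleGraph.Walk.nil))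
      simpa using this
    have hne0 : G.dist u v ≠ 0 := by
      intro h0
      rw [SimpleGraph.dist_eq_zero_iff_eq_or_not_reachable] at h0
      rcases h0 with h0 | h0
      · exact h h0
      · exact h0 ⟨SimpleGraph.Walk.cons h1 (SimpleGraph.Walk.cons h2 SimpleGraph.Walk.nil)⟩
    have hne1 : G.dist u v ≠ 1 := by
      intro h0
      rw [SimpleGraph.dist_eq_one_iff_adj, cmp_adj] at h0
      exact h0 hp
    omega
  · simp only [hp, if_false]
    rw [SimpleGraph.dist_eq_one_iff_adj, cmp_adj]
    exact hp

private lemma card_part (i : Fin k) :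
    (Finset.univ.filter (fun w : Σ j, Fin (r j) => w.1 = i)).card = r i := by
  rw [show (Finset.univ.filter (fun w : Σ j, Fin (r j) => w.1 = i))
      = Finset.univ.map ⟨Sigma.mk i, sigma_mk_injective⟩ by
    ext ⟨a, b⟩
    simp only [mem_filter, mem_univ, true_and, mem_map, Function.Embedding.coeFn_mk]
    constructor
    · rintro rfl; exact ⟨b, rfl⟩
    · rintro ⟨c, hc⟩; exact (Sigma.mk.inj_iff.mp hc).1.symm]
  simp

private lemma lower_bound (hk : 2 ≤ k) (hr : ∀ i, 1 ≤ r i) (S : Finset (Σ i, Fin (r i)))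
    (hS : IsOMR (completeMultipartiteGraph fun i : Fin k => Fin (r i)) S) :
    (∑ i, r i) - k ≤ S.card := by
  set G := completeMultipartiteGraph fun i : Fin k => Fin (r i) with hG
  have hfib : ∀ i : Fin k, (Sᶜ.filter (fun w => w.1 = i)).card ≤ 1 := by
    intro i
    by_contra hgt
    push_neg at hgt
    obtain ⟨u, hu, v, hv, huv⟩ := Finset.one_lt_card.mp hgt
    simp only [mem_filter, Finset.mem_compl] at hu hv
    apply huv
    apply hS u hu.1 v hv.1
    unfold mrep
    apply Multiset.map_congr rfl
    intro w hw
    have hwS : w ∈ S := hw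
    have hwu : u ≠ w := fun e => hu.1 (e ▸ hwS)
    have hwv : v ≠ w := fun e => hv.1 (e ▸ hwS)
    rw [cmp_dist hk hr u w hwu, cmp_dist hk hr v w hwv, hu.2, hv.2]
  have h1 : Sᶜ.card ≤ k := by
    rw [Finset.card_eq_sum_card_fiberwise (f := fun w => w.1) (t := Finset.univ)
      (fun x _ => Finset.mem_univ x.1)]
    calc ∑ i : Fin k, (Sᶜ.filter (fun w => w.1 = i)).card ≤ ∑ _i : Fin k, 1 :=
          Finset.sum_le_sum fun i _ => hfib i
      _ = k := by simp
  have h2 := Finset.card_compl S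
  have h3 : Fintype.card (Σ i, Fin (r i)) = ∑ i, r i := by simp
  have h4 : S.card ≤ Fintype.card (Σ i, Fin (r i)) := Finset.card_le_univ S
  omega

private lemma count_two (hk : 2 ≤ k) (hr : ∀ i, 1 ≤ r i) (u : Σ i, Fin (r i))
    (hu : (u.2 : ℕ) = 0) :
    Multiset.count 2 (mrep (completeMultipartiteGraph fun i : Fin k => Fin (r i)) u
      (Finset.univ.filter fun w : Σ i, Fin (r i) => (w.2 : ℕ) ≠ 0)) = r u.1 - 1 := by
  set G := completeMultipartiteGraph fun i : Fin k => Fin (r i) with hG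
  set S : Finset (Σ i, Fin (r i)) := Finset.univ.filter fun w => (w.2 : ℕ) ≠ 0 with hSdef
  unfold mrep
  rw [Multiset.count_map]
  rw [show S.val.filter (fun a => 2 = G.dist u a) = (S.filter (fun a => 2 = G.dist u a)).val from
    (Finset.filter_val _ _).symm]
  change (S.filter (fun a => 2 = G.dist u a)).card = _
  have hset : S.filter (fun a => 2 = G.dist u a)
      = (Finset.univ.filter (fun w : Σ i, Fin (r i) => w.1 = u.1)).erase u := by
    ext w
    simp only [hSdef, Finset.mem_filter, Finset.mem_univ, true_and, Finset.mem_erase,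
      Finset.filter_filter, Finset.mem_filter]
    constructor
    · rintro ⟨hw0, hd⟩
      have hwu : u ≠ w := by
        rintro rfl; exact hw0 hu
      rw [cmp_dist hk hr u w hwu] at hd
      by_cases hp : u.1 = w.1
      · exact ⟨fun e => hwu e.symm, hp.symm⟩
      · rw [if_neg hp] at hd; omega
    · rintro ⟨hwu, hp⟩
      obtain ⟨i, a⟩ := u
      obtain ⟨j, b⟩ := w
      simp only at hp hu
      subst hp
      refine ⟨?_, ?_⟩
      · intro hb0
        apply hwu
        congr 1
        exact Fin.ext (by rw [hb0, hu])
      · rw [cmp_dist hk hr _ _ (fun e => hwu e.symm), if_pos rfl]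
  rw [hset, Finset.card_erase_of_mem (by simp), card_part]

theorem stmt_6 (k : ℕ) (hk : 2 ≤ k) (r : Fin k → ℕ)
    (hmono : StrictMono r) (hr : 2 ≤ r ⟨0, by omega⟩) :
    dimMS (completeMultipartiteGraph fun i : Fin k => Fin (r i)) = (∑ i, r i) - k := by
  have hr2 : ∀ i, 2 ≤ r i := fun i =>
    le_trans hr (hmono.monotone (by simp [Fin.le_def]))
  have hr1 : ∀ i, 1 ≤ r i := fun i => le_trans (by norm_num) (hr2 i)
  set G := completeMultipartiteGraph fun i : Fin k => Fin (r i) with hG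
  set S : Finset (Σ i, Fin (r i)) := Finset.univ.filter fun w => (w.2 : ℕ) ≠ 0 with hSdef
  have hScompl : Sᶜ = Finset.univ.image
      (fun i : Fin k => (⟨i, ⟨0, hr1 i⟩⟩ : Σ i, Fin (r i))) := by
    ext ⟨j, b⟩
    simp only [hSdef, Finset.mem_compl, Finset.mem_filter, Finset.mem_univ, true_and, not_not,
      Finset.mem_image]
    constructor
    · intro hb
      exact ⟨j, by congr 1; exact Fin.ext (by simp [hb])⟩
    · rintro ⟨i, hi⟩
      obtain ⟨h1, h2⟩ := Sigma.mk.inj_iff.mp hi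
      subst h1
      rw [← eq_of_heq h2]
  have hScard : S.card = (∑ i, r i) - k := by
    have h2 := Finset.card_compl S
    have h3 : Fintype.card (Σ i, Fin (r i)) = ∑ i, r i := by simp
    have h5 : Sᶜ.card = k := by
      rw [hScompl, Finset.card_image_of_injective _
        (fun a b hab => (Sigma.mk.inj_iff.mp hab).1)]
      simp
    have h4 : S.card ≤ Fintype.card (Σ i, Fin (r i)) := Finset.card_le_univ S
    omega
  have hOMR : IsOMR G S := by
    intro u hu v hv heq
    have hu0 : (u.2 : ℕ) = 0 := by
      simpa [hSdef] using hu
    have hv0 : (v.2 : ℕ) = 0 := by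
      simpa [hSdef] using hv
    have hcnt : r u.1 - 1 = r v.1 - 1 := by
      rw [← count_two hk hr1 u hu0, ← count_two hk hr1 v hv0, heq]
    have hfst : u.1 = v.1 := hmono.injective (by have := hr2 u.1; have := hr2 v.1; omega)
    obtain ⟨i, a⟩ := u
    obtain ⟨j, b⟩ := v
    simp only at hfst
    subst hfst
    simp only at hu0 hv0
    congr 1
    exact Fin.ext (by rw [hu0, hv0])
  refine le_antisymm (Nat.sInf_le ⟨S, hScard, hOMR⟩) ?_
  refine le_csInf ⟨(∑ i, r i) - k, S, hScard, hOMR⟩ ?_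
  rintro n ⟨T, hTcard, hTomr⟩
  exact hTcard ▸ lower_bound hk hr1 T hTomr
end

section
/- If G is a connected graph with dim_ms(G) = 2 and S = {u, v} is an outer multiset resolving set of G of cardinality 2, then d_G(u,v) ≤ 2. -/
open SimpleGraph

theorem stmt_7 (V : Type*) [Fintype V] [DecidableEq V] (G : SimpleGraph V)
    (hconn : G.Connected) (hdim : dimMS G = 2) (u v : V) (huv : u ≠ v)
    (hres : IsOMR G {u, v}) :
    G.dist u v ≤ 2 := by
  by_contra hk
  push_neg at hk
  set k := G.dist u v with hkdef
  have hk3 : 3 ≤ k := hk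
  obtain ⟨p, hp⟩ := (hconn u v).exists_walk_length_eq_dist
  set a := p.getVert 1 with ha
  set b := p.getVert (k - 1) with hb
  have hadj_ua : G.Adj u a := by
    have := p.adj_getVert_succ (i := 0) (by omega)
    simpa [p.getVert_zero] using this
  have hadj_bv : G.Adj b v := by
    have := p.adj_getVert_succ (i := k - 1) (by omega)
    have h2 : k - 1 + 1 = p.length := by omega
    rw [h2, p.getVert_length] at this
    exact this
  have hdua : G.dist u a = 1 := dist_eq_one_iff_adj.mpr hadj_ua
  have hdbv : G.dist b v = 1 := dist_eq_one_iff_adj.mpr hadj_bv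
  -- a ∈ support, b ∈ support
  have hasup : a ∈ p.support := by
    rw [SimpleGraph.Walk.mem_support_iff_exists_getVert]
    exact ⟨1, rfl, by omega⟩
  have hbsup : b ∈ p.support := by
    rw [SimpleGraph.Walk.mem_support_iff_exists_getVert]
    exact ⟨k - 1, rfl, by omega⟩
  -- dist a v ≤ k - 1
  have hdav_le : G.dist a v ≤ k - 1 := by
    have hspec := p.take_spec hasup
    have hlen : (p.takeUntil a hasup).length + (p.dropUntil a hasup).length = k := by
      rw [← SimpleGraph.Walk.length_append, hspec, hp]
    have h1 : 1 ≤ (p.takeUntil a hasup).length := by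
      have := SimpleGraph.dist_le (p.takeUntil a hasup)
      omega
    have := SimpleGraph.dist_le (p.dropUntil a hasup)
    omega
  have hdav_ge : k - 1 ≤ G.dist a v := by
    have := hconn.dist_triangle (u := u) (v := a) (w := v)
    omega
  have hdav : G.dist a v = k - 1 := le_antisymm hdav_le hdav_ge
  -- dist u b ≤ k - 1
  have hdub_le : G.dist u b ≤ k - 1 := by
    have hspec := p.take_spec hbsup
    have hlen : (p.takeUntil b hbsup).length + (p.dropUntil b hbsup).length = k := by
      rw [← SimpleGraph.Walk.length_append, hspec, hp]
    have h1 : 1 ≤ (p.dropUntil b hbsup).length := by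
      have := SimpleGraph.dist_le (p.dropUntil b hbsup)
      omega
    have := SimpleGraph.dist_le (p.takeUntil b hbsup)
    omega
  have hdub_ge : k - 1 ≤ G.dist u b := by
    have := hconn.dist_triangle (u := u) (v := b) (w := v)
    omega
  have hdub : G.dist u b = k - 1 := le_antisymm hdub_le hdub_ge
  have hdau : G.dist a u = 1 := by rw [SimpleGraph.dist_comm]; exact hdua
  have hdbu : G.dist b u = k - 1 := by rw [SimpleGraph.dist_comm]; exact hdub
  have hdvb : G.dist v b = 1 := by rw [SimpleGraph.dist_comm]; exact hdbv
  -- a ∉ {u, v}, b ∉ {u, v}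
  have hanu : a ≠ u := (hadj_ua.ne).symm
  have hanv : a ≠ v := by
    intro h; rw [h] at hdav; simp [SimpleGraph.dist_self] at hdav; omega
  have hbnv : b ≠ v := hadj_bv.ne
  have hbnu : b ≠ u := by
    intro h; rw [h] at hdub; simp [SimpleGraph.dist_self] at hdub; omega
  have hamem : a ∉ ({u, v} : Finset V) := by simp [hanu, hanv]
  have hbmem : b ∉ ({u, v} : Finset V) := by simp [hbnu, hbnv]
  have hmrep : mrep G a {u, v} = mrep G b {u, v} := by
    have hval : ({u, v} : Finset V).val = {u, v} := by
      rw [Finset.insert_val, Multiset.ndinsert_of_notMem (by simp [huv])]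
      rfl
    simp only [mrep, hval, Multiset.map_cons, Multiset.map_singleton,
      Multiset.insert_eq_cons]
    rw [hdau, hdav, hdbu, hdbv]
    exact Multiset.cons_swap 1 (k-1) 0
  have hab : a = b := hres a hamem b hbmem hmrep
  rw [hab, hdbu] at hdau
  omega
end

section
/- Let G be a connected graph with dim_ms(G) = 2 and let S be an outer multiset resolving set of G of cardinality 2. Then for every k ≥ 1, the set L_k(S) = {u ∈ V(G) : min_{x∈S} d_G(u,x) = k} satisfies |L_k(S)| ≤ 3. -/
open SimpleGraph

/-- `Lset G S k` is the set of vertices whose minimum distance to the set `S` equals `k`. -/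
def Lset {V : Type*} (G : SimpleGraph V) (S : Finset V) (k : ℕ) : Set V :=
  {u | sInf {d : ℕ | ∃ x ∈ S, G.dist u x = d} = k}

/-!
A resolving pair `{x, y}` has `d(x, y) ≤ 2`: otherwise the neighbour of `x` and the neighbour
of `y` on a geodesic between them have the same distance multiset `{1, d(x, y) - 1}`.
A vertex `u` of `L_k({x, y})` has distance multiset `{k, m}` with `k ≤ m ≤ k + d(x, y)` by the
triangle inequality, and `m` determines `u`; so there are at most `d(x, y) + 1 ≤ 3` of them.
-/

theorem Multiset.pair_eq_min_max {α : Type*} [LinearOrder α] (a b : α) :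
    ({a, b} : Multiset α) = {min a b, max a b} := by
  rcases le_total a b with h | h
  · rw [min_eq_left h, max_eq_right h]
  · rw [min_eq_right h, max_eq_left h, Multiset.pair_comm]

namespace SimpleGraph

variable {V : Type*} {G : SimpleGraph V} {u v : V}

lemma Reachable.exists_adj_dist_add_one_eq (hr : G.Reachable u v) (hne : u ≠ v) :
    ∃ a, G.Adj u a ∧ G.dist a v + 1 = G.dist u v := by
  obtain ⟨p, hp⟩ := hr.exists_walk_length_eq_dist
  cases p with
  | nil => exact absurd rfl hne
  | cons h q =>
    exact ⟨_, h, by rw [← length_eq_dist_of_subwalk hp (q.isSubwalk_cons h), ← hp,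
      Walk.length_cons]⟩

end SimpleGraph

section ResolvingPair

variable {V : Type*} [DecidableEq V] {G : SimpleGraph V} {u v x y : V} {k : ℕ}

lemma mrep_pair (hxy : x ≠ y) : mrep G u {x, y} = {G.dist u x, G.dist u y} := by
  have hval : ({x, y} : Finset V).val = {x, y} := by
    rw [Finset.insert_val, Multiset.ndinsert_of_notMem (by simpa using hxy)]
    rfl
  simp [mrep, hval]

lemma notMem_pair_of_dist_pos (hx : 0 < G.dist u x) (hy : 0 < G.dist u y) :
    u ∉ ({x, y} : Finset V) := by
  simp only [Finset.mem_insert, Finset.mem_singleton]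
  rintro (rfl | rfl) <;> simp at hx hy

lemma mem_Lset_pair_iff : u ∈ Lset G {x, y} k ↔ min (G.dist u x) (G.dist u y) = k := by
  have : {d : ℕ | ∃ s ∈ ({x, y} : Finset V), G.dist u s = d} = {G.dist u x, G.dist u y} := by
    ext d
    simp [eq_comm]
  simp only [Lset, Set.mem_ofPred_eq, this, csInf_pair]

lemma IsOMR.eq_of_dist_pair_eq (hres : IsOMR G {x, y}) (hxy : x ≠ y)
    (hu : u ∉ ({x, y} : Finset V)) (hv : v ∉ ({x, y} : Finset V))
    (h : ({G.dist u x, G.dist u y} : Multiset ℕ) = {G.dist v x, G.dist v y}) : u = v :=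
  hres u hu v hv (by rwa [mrep_pair hxy, mrep_pair hxy])

theorem IsOMR.dist_le_two (hconn : G.Connected) (hres : IsOMR G {x, y}) (hxy : x ≠ y) :
    G.dist x y ≤ 2 := by
  by_contra! hfar
  obtain ⟨a, hxa, hay⟩ := (hconn x y).exists_adj_dist_add_one_eq hxy
  obtain ⟨b, hyb, hbx⟩ := (hconn y x).exists_adj_dist_add_one_eq hxy.symm
  rw [dist_comm (u := y)] at hbx
  have hax : G.dist a x = 1 := dist_eq_one_iff_adj.mpr hxa.symm
  have hby : G.dist b y = 1 := dist_eq_one_iff_adj.mpr hyb.symm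
  have hayx : G.dist a y = G.dist b x := by omega
  have hab : a = b := hres.eq_of_dist_pair_eq hxy
    (notMem_pair_of_dist_pos (G := G) (by omega) (by omega))
    (notMem_pair_of_dist_pos (G := G) (by omega) (by omega))
    (by rw [hax, hby, hayx, Multiset.pair_comm])
  subst hab
  omega

lemma max_dist_mem_Icc_of_mem_Lset (hconn : G.Connected) (hu : u ∈ Lset G {x, y} k) :
    max (G.dist u x) (G.dist u y) ∈ Set.Icc k (k + G.dist x y) := by
  rw [mem_Lset_pair_iff] at hu
  have hyx : G.dist u y ≤ G.dist u x + G.dist x y := hconn.dist_triangle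
  have hxy : G.dist u x ≤ G.dist u y + G.dist y x := hconn.dist_triangle
  rw [dist_comm (u := y)] at hxy
  constructor <;> omega

lemma IsOMR.injOn_max_dist (hres : IsOMR G {x, y}) (hxy : x ≠ y) (hk : 1 ≤ k) :
    Set.InjOn (fun u => max (G.dist u x) (G.dist u y)) (Lset G {x, y} k) := by
  intro u hu v hv huv
  rw [mem_Lset_pair_iff] at hu hv
  refine hres.eq_of_dist_pair_eq hxy (notMem_pair_of_dist_pos (G := G) (by omega) (by omega))
    (notMem_pair_of_dist_pos (G := G) (by omega) (by omega)) ?_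
  rw [Multiset.pair_eq_min_max, Multiset.pair_eq_min_max (G.dist v x), hu, hv,
    show max (G.dist u x) (G.dist u y) = max (G.dist v x) (G.dist v y) from huv]

end ResolvingPair

theorem stmt_8_general (V : Type*) (G : SimpleGraph V)
    (hconn : G.Connected) (S : Finset V)
    (hcard : S.card = 2) (hres : IsOMR G S) :
    ∀ k : ℕ, 1 ≤ k → (Lset G S k).ncard ≤ 3 := by
  classical
  intro k hk
  obtain ⟨x, y, hxy, rfl⟩ := Finset.card_eq_two.mp hcard
  calc (Lset G {x, y} k).ncard
      ≤ (Set.Icc k (k + G.dist x y)).ncard :=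
        Set.ncard_le_ncard_of_injOn _ (fun u hu => max_dist_mem_Icc_of_mem_Lset hconn hu)
          (hres.injOn_max_dist hxy hk) (Set.finite_Icc _ _)
    _ ≤ 3 := by
        rw [Set.ncard_eq_toFinset_card', Set.toFinset_Icc, Nat.card_Icc]
        have := hres.dist_le_two hconn hxy
        omega

theorem stmt_8 (V : Type*) [Fintype V] (G : SimpleGraph V)
    (hconn : G.Connected) (hdim : dimMS G = 2) (S : Finset V)
    (hcard : S.card = 2) (hres : IsOMR G S) :
    ∀ k : ℕ, 1 ≤ k → (Lset G S k).ncard ≤ 3 :=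
  stmt_8_general V G hconn S hcard hres
end

section
/- Let G be a connected graph with dim_ms(G) = 2 and let S = {u,v} be an outer multiset resolving set of G of cardinality 2 whose two vertices are adjacent. Then for every k ≥ 1, the set L_k(S) = {w ∈ V(G) : min_{x∈S} d_G(w,x) = k} satisfies |L_k(S)| ≤ 2 and |L_{k+1}(S)| ≤ |L_k(S)|. -/
open SimpleGraph

set_option linter.unusedSectionVars false

section helpers
variable {V : Type*} [DecidableEq V] {G : SimpleGraph V} {u v : V}

lemma mrep_pair_s9 (huv : u ≠ v) (w : V) :
    mrep G w {u, v} = {G.dist w u, G.dist w v} := by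
  have : ({u, v} : Finset V).val = u ::ₘ {v} := by
    rw [Finset.insert_val, Multiset.ndinsert_of_notMem (by simp [huv])]
    rfl
  simp [mrep, this]

lemma mem_Lset_pair (w : V) (k : ℕ) :
    w ∈ Lset G {u, v} k ↔ min (G.dist w u) (G.dist w v) = k := by
  have hset : {d : ℕ | ∃ x ∈ ({u, v} : Finset V), G.dist w x = d}
      = {G.dist w u, G.dist w v} := by
    ext d
    constructor
    · rintro ⟨x, hx, rfl⟩
      rcases Finset.mem_insert.mp hx with rfl | hx
      · exact Or.inl rfl
      · exact Or.inr (by rw [Finset.mem_singleton.mp hx]; rfl)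
    · rintro (rfl | rfl)
      · exact ⟨u, by simp⟩
      · exact ⟨v, by simp⟩
  have hinf : sInf ({G.dist w u, G.dist w v} : Set ℕ) = min (G.dist w u) (G.dist w v) := by
    apply le_antisymm
    · rcases min_cases (G.dist w u) (G.dist w v) with ⟨h, _⟩ | ⟨h, _⟩ <;> rw [h]
      · exact Nat.sInf_le (Or.inl rfl)
      · exact Nat.sInf_le (Or.inr rfl)
    · have hne : ({G.dist w u, G.dist w v} : Set ℕ).Nonempty := ⟨_, Or.inl rfl⟩
      rcases Nat.sInf_mem hne with h | h
      · rw [h]; exact min_le_left _ _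
      · rw [h]; exact min_le_right _ _
  simp only [Lset, Set.mem_setOf_eq, hset, hinf]

lemma exists_adj_dist (hconn : G.Connected) (w x : V) (k : ℕ) (h : G.dist w x = k + 1) :
    ∃ w', G.Adj w w' ∧ G.dist w' x = k := by
  obtain ⟨p, hp⟩ := (hconn w x).exists_walk_length_eq_dist
  rw [h] at hp
  cases p with
  | nil => simp at hp
  | @cons _ w' _ ha q =>
    refine ⟨w', ha, ?_⟩
    rw [Walk.length_cons] at hp
    have h1 : G.dist w' x ≤ k := by
      have := SimpleGraph.dist_le q
      omega
    have ht := hconn.dist_triangle (u := w) (v := w') (w := x)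
    have hd : G.dist w w' = 1 := dist_eq_one_iff_adj.mpr ha
    omega

lemma dist_diff_le (hconn : G.Connected) (hadj : G.Adj u v) (w : V) :
    G.dist w u ≤ G.dist w v + 1 := by
  have ht := hconn.dist_triangle (u := w) (v := v) (w := u)
  have hd : G.dist v u = 1 := dist_eq_one_iff_adj.mpr hadj.symm
  omega

lemma pair_eq_cases {a b c d : ℕ} (h : ({a, b} : Multiset ℕ) = {c, d}) :
    (a = c ∧ b = d) ∨ (a = d ∧ b = c) := by
  have h1 : a ∈ ({c, d} : Multiset ℕ) := h ▸ Multiset.mem_cons_self _ _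
  have h2 : a + b = c + d := by
    have := congrArg Multiset.sum h
    simpa using this
  simp only [Multiset.insert_eq_cons, Multiset.mem_cons, Multiset.mem_singleton] at h1
  omega

lemma down_aux (hconn : G.Connected) (hadj : G.Adj u v) {x : V} {k : ℕ}
    (h1 : G.dist x u = k + 1) (h2 : k + 1 ≤ G.dist x v) :
    ∃ y, G.dist y u = k ∧ G.dist x v ≤ G.dist y v + 1 ∧ G.dist y v ≤ k + 1 ∧
      y ∈ Lset G {u, v} k := by
  obtain ⟨y, hya, hyd⟩ := exists_adj_dist hconn x u k h1
  have hub : G.dist y v ≤ G.dist y u + 1 := dist_diff_le hconn hadj.symm y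
  have hlb : G.dist x v ≤ G.dist y v + 1 := by
    have ht := hconn.dist_triangle (u := x) (v := y) (w := v)
    have hd : G.dist x y = 1 := dist_eq_one_iff_adj.mpr hya
    omega
  refine ⟨y, hyd, hlb, by omega, ?_⟩
  rw [mem_Lset_pair, hyd]
  omega

end helpers


theorem stmt_9 (V : Type*) [Fintype V] [DecidableEq V] (G : SimpleGraph V)
    (hconn : G.Connected) (hdim : dimMS G = 2) (u v : V) (hadj : G.Adj u v)
    (hres : IsOMR G {u, v}) :
    ∀ k : ℕ, 1 ≤ k →
      (Lset G {u, v} k).ncard ≤ 2 ∧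
      (Lset G {u, v} (k + 1)).ncard ≤ (Lset G {u, v} k).ncard := by
  have hres : ∀ a ∉ ({u, v} : Finset V), ∀ b ∉ ({u, v} : Finset V),
      mrep G a {u, v} = mrep G b {u, v} → a = b := hres
  classical
  have huv : u ≠ v := hadj.ne
  have hLcomm : Lset G {v, u} = Lset G {u, v} := by rw [Finset.pair_comm v u]
  have hd : ∀ w, G.dist w u ≤ G.dist w v + 1 ∧ G.dist w v ≤ G.dist w u + 1 :=
    fun w => ⟨dist_diff_le hconn hadj w, dist_diff_le hconn hadj.symm w⟩
  have hnotS : ∀ (k : ℕ), 1 ≤ k → ∀ w ∈ Lset G {u, v} k, w ∉ ({u, v} : Finset V) := by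
    intro k hk w hw hmem
    rw [mem_Lset_pair] at hw
    have l1 := min_le_left (G.dist w u) (G.dist w v)
    have l2 := min_le_right (G.dist w u) (G.dist w v)
    have h0 : G.dist w u = 0 ∨ G.dist w v = 0 := by
      rcases Finset.mem_insert.mp hmem with rfl | hmem
      · exact Or.inl SimpleGraph.dist_self
      · exact Or.inr (by rw [Finset.mem_singleton.mp hmem]; exact SimpleGraph.dist_self)
    omega
  have hinj : ∀ (k : ℕ), 1 ≤ k → Set.InjOn (fun w => mrep G w {u, v}) (Lset G {u, v} k) := by
    intro k hk x hx y hy hxy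
    exact hres x (hnotS k hk x hx) y (hnotS k hk y hy) hxy
  have hval : ∀ (k : ℕ) (w : V), w ∈ Lset G {u, v} k →
      mrep G w {u, v} = {k, k} ∨ mrep G w {u, v} = {k, k + 1} := by
    intro k w hw
    rw [mem_Lset_pair] at hw
    obtain ⟨d1, d2⟩ := hd w
    rw [mrep_pair_s9 huv]
    rcases le_total (G.dist w u) (G.dist w v) with h | h
    · have ha : G.dist w u = k := by rw [min_eq_left h] at hw; exact hw
      have hb : G.dist w v = k ∨ G.dist w v = k + 1 := by omega
      rcases hb with h2 | h2 <;> rw [ha, h2]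
      · exact Or.inl rfl
      · exact Or.inr rfl
    · have hb : G.dist w v = k := by rw [min_eq_right h] at hw; exact hw
      have ha : G.dist w u = k ∨ G.dist w u = k + 1 := by omega
      rcases ha with h2 | h2 <;> rw [hb, h2]
      · exact Or.inl rfl
      · exact Or.inr (Multiset.pair_comm _ _)
  have card2 : ∀ (k : ℕ), 1 ≤ k → (Lset G {u, v} k).ncard ≤ 2 := by
    intro k hk
    have himg : (fun w => mrep G w {u, v}) '' (Lset G {u, v} k)
        ⊆ {({k, k} : Multiset ℕ), {k, k + 1}} := by
      rintro m ⟨w, hw, rfl⟩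
      rcases hval k w hw with h | h
      · exact Or.inl h
      · exact Or.inr h
    calc (Lset G {u, v} k).ncard
        = ((fun w => mrep G w {u, v}) '' (Lset G {u, v} k)).ncard :=
          (Set.ncard_image_of_injOn (hinj k hk)).symm
      _ ≤ ({({k, k} : Multiset ℕ), {k, k + 1}} : Set (Multiset ℕ)).ncard :=
          Set.ncard_le_ncard himg ((Set.finite_singleton _).insert _)
      _ ≤ 2 := by
          have h := Set.ncard_insert_le ({k, k} : Multiset ℕ) {({k, k + 1} : Multiset ℕ)}
          simpa using h
  have hdown : ∀ (k : ℕ) (x : V), x ∈ Lset G {u, v} (k + 1) →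
      ∃ y, y ∈ Lset G {u, v} k := by
    intro k x hx
    rw [mem_Lset_pair] at hx
    obtain ⟨d1, d2⟩ := hd x
    rcases le_total (G.dist x u) (G.dist x v) with h | h
    · have ha : G.dist x u = k + 1 := by rw [min_eq_left h] at hx; exact hx
      obtain ⟨y, _, _, _, hy⟩ := down_aux hconn hadj ha (by omega)
      exact ⟨y, hy⟩
    · have hb : G.dist x v = k + 1 := by rw [min_eq_right h] at hx; exact hx
      obtain ⟨y, _, _, _, hy⟩ := down_aux hconn hadj.symm hb (by omega)
      exact ⟨y, hLcomm ▸ hy⟩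
  intro k hk
  refine ⟨card2 k hk, ?_⟩
  rcases Set.eq_empty_or_nonempty (Lset G {u, v} (k + 1)) with he | ⟨x0, hx0⟩
  · simp [he]
  have hL1 : 1 ≤ (Lset G {u, v} k).ncard := by
    obtain ⟨y, hy⟩ := hdown k x0 hx0
    exact (Set.ncard_pos (Set.toFinite _)).mpr ⟨y, hy⟩
  by_cases hsmall : (Lset G {u, v} (k + 1)).ncard ≤ 1
  · omega
  push_neg at hsmall
  obtain ⟨a, b, ha, hb, hab⟩ := (Set.one_lt_ncard_iff (Set.toFinite _)).mp hsmall
  have hmne : mrep G a {u, v} ≠ mrep G b {u, v} :=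
    fun h => hab (hinj (k + 1) (by omega) ha hb h)
  have key : ∀ x y : V, x ∈ Lset G {u, v} (k + 1) → y ∈ Lset G {u, v} (k + 1) →
      mrep G x {u, v} = {k + 1, k + 1} → mrep G y {u, v} = {k + 1, k + 2} →
      2 ≤ (Lset G {u, v} k).ncard := by
    intro x y hx hy hA hB
    have hx1 : G.dist x u = k + 1 ∧ G.dist x v = k + 1 := by
      rcases pair_eq_cases ((mrep_pair_s9 huv x).symm.trans hA) with h | h
      · exact h
      · exact ⟨h.1, h.2⟩
    -- a vertex y' in L_k with unequal distances
    obtain ⟨y', hy'mem, hy'ne⟩ :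
        ∃ y', y' ∈ Lset G {u, v} k ∧ G.dist y' u ≠ G.dist y' v := by
      rcases pair_eq_cases ((mrep_pair_s9 huv y).symm.trans hB) with ⟨h1, h2⟩ | ⟨h1, h2⟩
      · obtain ⟨y', e1, e2, e3, hmem⟩ := down_aux hconn hadj h1 (by omega)
        exact ⟨y', hmem, by omega⟩
      · obtain ⟨y', e1, e2, e3, hmem⟩ := down_aux hconn hadj.symm h2 (by omega)
        exact ⟨y', hLcomm ▸ hmem, by omega⟩
    -- a vertex x' in L_k with equal distances
    obtain ⟨x', hx'mem, hx'eq⟩ :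
        ∃ x', x' ∈ Lset G {u, v} k ∧ G.dist x' u = G.dist x' v := by
      obtain ⟨x1, f1, f2, f3, hmem1⟩ := down_aux hconn hadj hx1.1 (by omega)
      obtain ⟨x2, g1, g2, g3, hmem2⟩ := down_aux hconn hadj.symm hx1.2 (by omega)
      rw [hLcomm] at hmem2
      by_cases hc1 : G.dist x1 v = k
      · exact ⟨x1, hmem1, by omega⟩
      by_cases hc2 : G.dist x2 u = k
      · exact ⟨x2, hmem2, by omega⟩
      exfalso
      have hv1 : G.dist x1 v = k + 1 := by omega
      have hv2 : G.dist x2 u = k + 1 := by omega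
      have hmeq : mrep G x1 {u, v} = mrep G x2 {u, v} := by
        rw [mrep_pair_s9 huv, mrep_pair_s9 huv, f1, hv1, g1, hv2]
        exact Multiset.pair_comm _ _
      have : x1 = x2 := hres x1 (hnotS k hk x1 hmem1) x2 (hnotS k hk x2 hmem2) hmeq
      rw [this] at f1
      omega
    have hne : x' ≠ y' := fun h => hy'ne (by rw [← h]; exact hx'eq)
    exact (Set.one_lt_ncard_iff (Set.toFinite _)).mpr ⟨x', y', hx'mem, hy'mem, hne⟩
  rcases hval (k + 1) a ha with hA | hA <;> rcases hval (k + 1) b hb with hB | hB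
  · exact absurd (hA.trans hB.symm) hmne
  · have := key a b ha hb hA hB
    have hc := card2 (k + 1) (by omega)
    omega
  · have := key b a hb ha hB hA
    have hc := card2 (k + 1) (by omega)
    omega
  · exact absurd (hA.trans hB.symm) hmne
end

section
/- If G is a connected graph with n(G) ≥ 2 and k ≥ 2, then dim_ms(G ∘ K_k) ≥ n(G)(k−1), where G ∘ K_k is the lexicographic product of G with the complete graph K_k. -/
open SimpleGraph

/-- The lexicographic product of two simple graphs: `(g, h)` and `(gʹ, hʹ)` are adjacent
iff `g gʹ` is an edge of `G`, or `g = gʹ` and `h hʹ` is an edge of `H`. -/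
def lexProd {α β : Type*} (G : SimpleGraph α) (H : SimpleGraph β) : SimpleGraph (α × β) where
  Adj p q := G.Adj p.1 q.1 ∨ (p.1 = q.1 ∧ H.Adj p.2 q.2)
  symm := by
    constructor
    intro p q h
    rcases h with h | ⟨h1, h2⟩
    · exact Or.inl h.symm
    · exact Or.inr ⟨h1.symm, h2.symm⟩
  loopless := by
    constructor
    intro p h
    rcases h with h | ⟨_, h2⟩
    · exact G.ne_of_adj h rfl
    · exact H.ne_of_adj h2 rfl

namespace SimpleGraph

variable {V W : Type*} {G : SimpleGraph V} {G' : SimpleGraph W}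

lemma edist_map_le (f : G →g G') (u v : V) : G'.edist (f u) (f v) ≤ G.edist u v := by
  by_cases hr : G.Reachable u v
  · obtain ⟨p, hp⟩ := hr.exists_walk_length_eq_edist
    calc G'.edist (f u) (f v) ≤ (p.map f).length := edist_le _
      _ = G.edist u v := by rw [Walk.length_map, hp]
  · exact edist_eq_top_of_not_reachable hr ▸ le_top

lemma Iso.edist_map (e : G ≃g G') (u v : V) : G'.edist (e u) (e v) = G.edist u v :=
  le_antisymm (edist_map_le e.toHom u v) (by simpa using edist_map_le e.symm.toHom (e u) (e v))

lemma Iso.dist_map (e : G ≃g G') (u v : V) : G'.dist (e u) (e v) = G.dist u v := by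
  simp only [dist, e.edist_map]

end SimpleGraph

section MultisetResolving

variable {V : Type*} {G : SimpleGraph V} {S : Finset V}

lemma mrep_apply_eq_of_fixes (e : G ≃g G) (he : ∀ w ∈ S, e w = w) (u : V) :
    mrep G (e u) S = mrep G u S :=
  Multiset.map_congr rfl fun w hw => by
    simpa only [he w hw] using e.dist_map u w

lemma IsOMR.apply_eq_of_fixes (hS : IsOMR G S) (e : G ≃g G) (he : ∀ w ∈ S, e w = w) {u : V}
    (hu : u ∉ S) (heu : e u ∉ S) : e u = u :=
  hS _ heu _ hu (mrep_apply_eq_of_fixes e he u)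

lemma isOMR_univ [Fintype V] : IsOMR G Finset.univ :=
  fun u hu => absurd (Finset.mem_univ u) hu

lemma le_dimMS [Fintype V] {n : ℕ} (h : ∀ S : Finset V, IsOMR G S → n ≤ S.card) :
    n ≤ dimMS G :=
  le_csInf ⟨_, Finset.univ, rfl, isOMR_univ⟩ fun _ ⟨S, hcard, hS⟩ => hcard ▸ h S hS

end MultisetResolving

section LexProd

variable {α β : Type*} {G : SimpleGraph α} {H : SimpleGraph β}

def lexProdFiberwiseIso (τ : α → H ≃g H) : lexProd G H ≃g lexProd G H where
  toEquiv := Equiv.prodShear (Equiv.refl α) fun a => (τ a).toEquiv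
  map_rel_iff' := by
    rintro ⟨a, b⟩ ⟨c, d⟩
    refine or_congr_right (and_congr_right fun hac => ?_)
    subst hac
    exact (τ a).map_adj_iff

/-- Otherwise transposing the second coordinates of `p` and `q` inside their fibre is an
automorphism fixing `S` pointwise. -/
lemma IsOMR.eq_of_fst_eq_lexProd_top {S : Finset (α × β)}
    (hS : IsOMR (lexProd G ⊤) S) {p q : α × β} (hp : p ∉ S) (hq : q ∉ S) (hpq : p.1 = q.1) :
    p = q := by
  classical
  obtain ⟨a, b⟩ := p
  obtain ⟨c, d⟩ := q
  subst hpq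
  let e := lexProdFiberwiseIso (G := G) fun x =>
    if x = a then Iso.completeGraph (Equiv.swap b d) else Iso.refl
  have he : ∀ w ∈ S, e w = w := by
    rintro ⟨x, y⟩ hw
    by_cases hx : x = a
    · subst hx
      have hyb : y ≠ b := by rintro rfl; exact hp hw
      have hyd : y ≠ d := by rintro rfl; exact hq hw
      simp [e, lexProdFiberwiseIso, Iso.completeGraph, Equiv.swap_apply_of_ne_of_ne hyb hyd]
    · simp [e, lexProdFiberwiseIso, hx]
  have hswap : e (a, b) = (a, d) := by
    simp [e, lexProdFiberwiseIso, Iso.completeGraph]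
  exact (hswap ▸ hS.apply_eq_of_fixes e he hp (hswap ▸ hq)).symm

lemma card_mul_sub_one_le_card_of_isOMR_lexProd_top [Fintype α] [Fintype β]
    {S : Finset (α × β)} (hS : IsOMR (lexProd G ⊤) S) :
    Fintype.card α * (Fintype.card β - 1) ≤ S.card := by
  classical
  have hcompl : Sᶜ.card ≤ Fintype.card α := by
    refine (Finset.card_le_card_of_injOn Prod.fst (fun _ _ => Finset.mem_univ _) ?_).trans_eq
      Finset.card_univ
    intro p hp q hq hpq
    simp only [Finset.coe_compl, Set.mem_compl_iff, Finset.mem_coe] at hp hq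
    exact hS.eq_of_fst_eq_lexProd_top hp hq hpq
  have hcard := Finset.card_compl S
  have hle := S.card_le_univ
  rw [Fintype.card_prod] at hcard hle
  rw [Nat.mul_sub_one]
  omega

end LexProd

theorem stmt_11_general (V : Type*) [Fintype V] (G : SimpleGraph V) (k : ℕ) :
    Fintype.card V * (k - 1) ≤ dimMS (lexProd G (⊤ : SimpleGraph (Fin k))) :=
  le_dimMS fun _ hS => by
    simpa using card_mul_sub_one_le_card_of_isOMR_lexProd_top hS

theorem stmt_11 (V : Type*) [Fintype V] (G : SimpleGraph V)
    (hconn : G.Connected) (hn : 2 ≤ Fintype.card V) (k : ℕ) (hk : 2 ≤ k) :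
    Fintype.card V * (k - 1) ≤ dimMS (lexProd G (⊤ : SimpleGraph (Fin k))) :=
  stmt_11_general V G k
end

section
/- For all integers s ≥ 4 and t ≥ 2, the set R = {(0,0), (1,0), (s−1,0)} is an outer multiset resolving set of the grid graph P_s □ P_t. -/
open SimpleGraph

/-!
Distances in `P_s □ P_t` are Manhattan distances, so a vertex `(i, j)` has distances
`i + j`, `|i - 1| + j` and `s - 1 - i + j` to the three vertices of `R`. Two vertices with
the same multiset of distances have the same sum `3j + |i - 1| + s - 1` of distances, and the
distance of each of them to `(0, 0)` occurs among the distances of the other; once the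
absolute value is resolved this is a finite system of linear constraints that forces equality
when `s ≥ 4`.
-/

namespace SimpleGraph

variable {V : Type*} {G : SimpleGraph V}

lemma natDist_le_length_of_adj {f : V → ℕ} (hf : ∀ ⦃x y⦄, G.Adj x y → Nat.dist (f x) (f y) ≤ 1)
    {u v : V} (p : G.Walk u v) : Nat.dist (f u) (f v) ≤ p.length := by
  induction p with
  | nil => simp
  | @cons u w v hadj _ ih =>
    calc Nat.dist (f u) (f v) ≤ Nat.dist (f u) (f w) + Nat.dist (f w) (f v) :=
          Nat.dist.triangle_inequality _ _ _
      _ ≤ 1 + _ := Nat.add_le_add (hf hadj) ih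
      _ = _ := by rw [Walk.length_cons, add_comm]

lemma dist_boxProd_of_reachable {W : Type*} {H : SimpleGraph W} {x y : V × W}
    (h₁ : G.Reachable x.1 y.1) (h₂ : H.Reachable x.2 y.2) :
    (G □ H).dist x y = G.dist x.1 y.1 + H.dist x.2 y.2 := by
  have h : (G □ H).Reachable x y := reachable_boxProd.2 ⟨h₁, h₂⟩
  apply Nat.cast_injective (R := ℕ∞)
  rw [Nat.cast_add, h.coe_dist_eq_edist, edist_boxProd, h₁.coe_dist_eq_edist,
    h₂.coe_dist_eq_edist]

lemma pathGraph_dist_le {n : ℕ} (a : Fin n) :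
    ∀ k (b : Fin n), b.val = a.val + k → (pathGraph n).dist a b ≤ k := by
  intro k
  induction k with
  | zero => intro b hb; simp [Fin.ext hb]
  | succ k ih =>
    intro b hb
    let b' : Fin n := ⟨a.val + k, by omega⟩
    have hadj : (pathGraph n).Adj b' b := pathGraph_adj.2 (Or.inl (by simp [b', hb]; omega))
    calc (pathGraph n).dist a b ≤ (pathGraph n).dist a b' + (pathGraph n).dist b' b :=
          (pathGraph_preconnected n a b').dist_triangle_left b
      _ ≤ k + 1 := Nat.add_le_add (ih b' rfl) (dist_eq_one_iff_adj.2 hadj).le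

lemma pathGraph_dist {n : ℕ} (a b : Fin n) : (pathGraph n).dist a b = Nat.dist a b := by
  apply le_antisymm
  · rcases le_total a.val b.val with hab | hab
    · exact pathGraph_dist_le a _ b (by rw [Nat.dist_eq_sub_of_le hab]; omega)
    · rw [dist_comm, Nat.dist_comm]
      exact pathGraph_dist_le b _ a (by rw [Nat.dist_eq_sub_of_le hab]; omega)
  · obtain ⟨p, hp⟩ := (pathGraph_preconnected n a b).exists_walk_length_eq_dist
    rw [← hp]
    refine natDist_le_length_of_adj (fun x y hxy => ?_) p
    rcases pathGraph_adj.1 hxy with h | h <;> simp [Nat.dist, ← h]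

lemma pathGraph_boxProd_dist {s t : ℕ} (u v : Fin s × Fin t) :
    (pathGraph s □ pathGraph t).dist u v = Nat.dist u.1 v.1 + Nat.dist u.2 v.2 := by
  rw [dist_boxProd_of_reachable (pathGraph_preconnected s _ _) (pathGraph_preconnected t _ _),
    pathGraph_dist, pathGraph_dist]

lemma mrep_triple [DecidableEq V] {a b c : V} (hab : a ≠ b) (hac : a ≠ c) (hbc : b ≠ c) (u : V) :
    mrep G u {a, b, c} = {G.dist u a, G.dist u b, G.dist u c} := by
  rw [mrep, Finset.insert_val_of_notMem (by simp [hab, hac]),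
    Finset.insert_val_of_notMem (by simp [hbc])]
  rfl

end SimpleGraph

lemma eq_of_distance_multiset_eq {s i j k l : ℕ} (hs : 4 ≤ s) (hi : i < s) (hk : k < s)
    (h : ({i + j, Nat.dist i 1 + j, Nat.dist i (s - 1) + j} : Multiset ℕ) =
      {k + l, Nat.dist k 1 + l, Nat.dist k (s - 1) + l}) :
    i = k ∧ j = l := by
  have hsum := congrArg Multiset.sum h
  have hmem : i + j ∈ ({k + l, Nat.dist k 1 + l, Nat.dist k (s - 1) + l} : Multiset ℕ) :=
    h ▸ by simp
  have hmem' : k + l ∈ ({i + j, Nat.dist i 1 + j, Nat.dist i (s - 1) + j} : Multiset ℕ) :=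
    h ▸ by simp
  have hdist_one : ∀ n, Nat.dist n 1 = if n = 0 then 1 else n - 1 := by
    intro n
    rcases n with _ | n <;> simp [Nat.dist]
  simp only [Multiset.insert_eq_cons, Multiset.sum_cons, Multiset.sum_singleton,
    Multiset.mem_cons, Multiset.mem_singleton, Nat.dist_eq_sub_of_le (by omega : i ≤ s - 1),
    Nat.dist_eq_sub_of_le (by omega : k ≤ s - 1), hdist_one] at hsum hmem hmem'
  split_ifs at hsum hmem hmem' <;> omega

theorem stmt_18 (s t : ℕ) (hs : 4 ≤ s) (ht : 2 ≤ t) :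
    IsOMR ((pathGraph s).boxProd (pathGraph t))
      ({((⟨0, by omega⟩ : Fin s), (⟨0, by omega⟩ : Fin t)),
        ((⟨1, by omega⟩ : Fin s), (⟨0, by omega⟩ : Fin t)),
        ((⟨s - 1, by omega⟩ : Fin s), (⟨0, by omega⟩ : Fin t))} : Finset (Fin s × Fin t)) := by
  intro u _ v _ h
  rw [mrep_triple (by simp [Prod.ext_iff]) (by simp [Prod.ext_iff]; omega)
      (by simp [Prod.ext_iff]; omega),
    mrep_triple (by simp [Prod.ext_iff]) (by simp [Prod.ext_iff]; omega)
      (by simp [Prod.ext_iff]; omega)] at h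
  simp only [pathGraph_boxProd_dist, Nat.dist_comm _ 0, Nat.dist_zero_left] at h
  obtain ⟨h₁, h₂⟩ := eq_of_distance_multiset_eq hs u.1.isLt v.1.isLt h
  exact Prod.ext (Fin.ext h₁) (Fin.ext h₂)
end
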